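/- arXiv:1711.10932 — 8 statements merged into one kernel-verified Lean document; each statement's English description precedes it below -/
import Mathlib

section
/- Let X be a complex Banach space, T a bounded operator on X, x₁,…,x_N ∈ X, and b ≥ 1. If {γ T^n x_i : 1 ≤ |γ| ≤ b, n ∈ ℕ, 1 ≤ i ≤ N} is dense in X, then the point spectrum of the adjoint T* is empty; consequently p(T) has dense range for every non-zero polynomial p. -/
open Polynomial NormedSpace

lemma aux_eig {X : Type*} [NormedAddCommGroup X] [NormedSpace ℂ X]
    (T : X →L[ℂ] X) (s : Multiset ℂ) :
    ∀ φ : StrongDual ℂ X, φ ≠ 0 →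
      (∀ z : X, φ ((Polynomial.aeval T ((s.map fun r => Polynomial.X - Polynomial.C r).prod) :
        X →L[ℂ] X) z) = 0) →
      ∃ (lam : ℂ) (ψ : StrongDual ℂ X), ψ ≠ 0 ∧ ∀ z : X, ψ (T z) = lam * ψ z := by
  induction s using Multiset.induction_on with
  | empty =>
    intro φ hφ h0
    exact absurd (ContinuousLinearMap.ext fun z => by simpa using h0 z) hφ
  | cons r s ih =>
    intro φ hφ h0
    set Q : X →L[ℂ] X :=
      (Polynomial.aeval T ((s.map fun r => Polynomial.X - Polynomial.C r).prod) : X →L[ℂ] X) with hQ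
    have key : ∀ z : X, φ (Q (T z)) = r * φ (Q z) := by
      intro z
      have h1 := h0 z
      rw [Multiset.map_cons, Multiset.prod_cons, mul_comm, map_mul] at h1
      rw [ContinuousLinearMap.mul_apply] at h1
      have h2 : (Polynomial.aeval T (Polynomial.X - Polynomial.C r) : X →L[ℂ] X) z
          = T z - r • z := by
        simp [map_sub, Polynomial.aeval_X, Polynomial.aeval_C, Algebra.algebraMap_eq_smul_one,
          ContinuousLinearMap.smul_apply, ContinuousLinearMap.one_apply]
      rw [h2, map_sub, map_smul, map_sub, map_smul, smul_eq_mul] at h1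
      exact sub_eq_zero.mp h1
    by_cases hψ : φ.comp Q = 0
    · exact ih φ hφ (fun z => by simpa using ContinuousLinearMap.ext_iff.mp hψ z)
    · exact ⟨r, φ.comp Q, hψ, fun z => by simpa using key z⟩

/-- If the union of the orbits of the annuli `[1,b]𝕋 xᵢ` is dense, then the point spectrum
of the adjoint `T*` is empty, and `p(T)` has dense range for every non-zero polynomial. -/
theorem stmt_3 {X : Type*} [NormedAddCommGroup X] [NormedSpace ℂ X] [CompleteSpace X]
    (T : X →L[ℂ] X) (b : ℝ) (hb : 1 ≤ b) (N : ℕ) (x : Fin N → X)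
    (h : Dense {y : X | ∃ γ : ℂ, 1 ≤ ‖γ‖ ∧ ‖γ‖ ≤ b ∧ ∃ n : ℕ, ∃ i : Fin N,
        y = γ • (T ^ n) (x i)}) :
    (∀ (lam : ℂ) (φ : StrongDual ℂ X), (∀ z : X, φ (T z) = lam * φ z) → φ = 0) ∧
    (∀ p : Polynomial ℂ, p ≠ 0 → DenseRange (⇑(Polynomial.aeval T p : X →L[ℂ] X))) := by
  have h1 : ∀ (lam : ℂ) (φ : StrongDual ℂ X), (∀ z : X, φ (T z) = lam * φ z) → φ = 0 := by
    obtain ⟨y0, γ0, hγ0, hγ0b, n0, i0, hy0⟩ := h.nonempty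
    have hNe : (Finset.univ : Finset (Fin N)).Nonempty := ⟨i0, Finset.mem_univ _⟩
    intro lam φ hφ
    by_contra hne
    have hpow : ∀ (n : ℕ) (z : X), φ ((T ^ n) z) = lam ^ n * φ z := by
      intro n
      induction n with
      | zero => intro z; simp
      | succ n ih =>
        intro z
        rw [pow_succ, ContinuousLinearMap.mul_apply, ih, hφ]
        ring
    have hnorm : (0:ℝ) < ‖φ‖ := by
      rcases (norm_nonneg φ).lt_or_eq with h' | h'
      · exact h'
      · exact absurd ((ContinuousLinearMap.opNorm_zero_iff φ).mp h'.symm) hne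
    have himg : ∀ (w : ℂ) (ε : ℝ), 0 < ε → ∃ (γ : ℂ) (n : ℕ) (i : Fin N),
        1 ≤ ‖γ‖ ∧ ‖γ‖ ≤ b ∧ ‖γ * lam ^ n * φ (x i) - w‖ < ε := by
      intro w ε hε
      obtain ⟨u, hu⟩ : ∃ u, φ u ≠ 0 := by
        by_contra hc; push_neg at hc
        exact hne (ContinuousLinearMap.ext fun z => by simp [hc])
      have hx0 : φ ((w / φ u) • u) = w := by
        rw [map_smul, smul_eq_mul, div_mul_cancel₀ _ hu]
      have hx0c := h ((w / φ u) • u)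
      rw [Metric.mem_closure_iff] at hx0c
      obtain ⟨y, hyS, hdy⟩ := hx0c (ε / ‖φ‖) (by positivity)
      obtain ⟨γ, hγ1, hγb, n, i, rfl⟩ := hyS
      refine ⟨γ, n, i, hγ1, hγb, ?_⟩
      have hval : φ (γ • (T ^ n) (x i)) = γ * lam ^ n * φ (x i) := by
        rw [map_smul, smul_eq_mul, hpow]; ring
      calc ‖γ * lam ^ n * φ (x i) - w‖ = ‖φ (γ • (T ^ n) (x i) - (w / φ u) • u)‖ := by
            rw [map_sub, hval, hx0]
        _ ≤ ‖φ‖ * ‖γ • (T ^ n) (x i) - (w / φ u) • u‖ := φ.le_opNorm _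
        _ < ‖φ‖ * (ε / ‖φ‖) := by
            gcongr
            rw [← dist_eq_norm, dist_comm]
            exact hdy
        _ = ε := by field_simp
    set M : ℝ := Finset.univ.sup' hNe fun j => ‖φ (x j)‖ with hM
    have hMle : ∀ j, ‖φ (x j)‖ ≤ M := fun j => by rw [hM]; exact Finset.le_sup' (fun j => ‖φ (x j)‖) (Finset.mem_univ j)
    have hM0 : 0 ≤ M := le_trans (norm_nonneg _) (hMle i0)
    rcases lt_or_ge ‖lam‖ 1 with hl | hl
    · -- bounded values case
      obtain ⟨γ, n, i, hγ1, hγb, hv⟩ := himg ((b * M + 1 : ℝ) : ℂ) 1 one_pos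
      have hvb : ‖γ * lam ^ n * φ (x i)‖ ≤ b * M := by
        rw [norm_mul, norm_mul, norm_pow]
        calc ‖γ‖ * ‖lam‖ ^ n * ‖φ (x i)‖ ≤ b * 1 * M := by
              gcongr
              · exact pow_le_one₀ (norm_nonneg _) hl.le
              · exact hMle i
          _ = b * M := by ring
      have hw : ‖((b * M + 1 : ℝ) : ℂ)‖ = b * M + 1 := by
        rw [Complex.norm_real, Real.norm_of_nonneg (by positivity)]
      have := norm_sub_norm_le (γ * lam ^ n * φ (x i)) ((b * M + 1 : ℝ) : ℂ)
      rw [hw] at this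
      have : b * M + 1 ≤ ‖γ * lam ^ n * φ (x i) - ((b * M + 1 : ℝ) : ℂ)‖ + ‖γ * lam ^ n * φ (x i)‖ := by
        have := norm_sub_norm_le (((b * M + 1 : ℝ) : ℂ)) (γ * lam ^ n * φ (x i))
        rw [hw, norm_sub_rev] at this
        linarith
      linarith
    · -- |lam| ≥ 1
      by_cases hzero : ∀ j, φ (x j) = 0
      · obtain ⟨γ, n, i, _, _, hv⟩ := himg 1 (1/2) (by norm_num)
        rw [hzero i] at hv
        simp at hv
        norm_num at hv
      · push_neg at hzero
        obtain ⟨j0, hj0⟩ := hzero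
        set F := Finset.univ.filter (fun j => φ (x j) ≠ 0) with hF
        have hFne : F.Nonempty := ⟨j0, by simp [hF, hj0]⟩
        set m : ℝ := F.inf' hFne fun j => ‖φ (x j)‖ with hm
        have hm0 : 0 < m := by
          rw [hm, Finset.lt_inf'_iff]
          intro j hj
          rw [hF, Finset.mem_filter] at hj
          exact norm_pos_iff.mpr hj.2
        obtain ⟨γ, n, i, hγ1, hγb, hv⟩ := himg ((m/2 : ℝ) : ℂ) (m/4) (by positivity)
        have hwn : ‖((m/2 : ℝ) : ℂ)‖ = m/2 := by
          rw [Complex.norm_real, Real.norm_of_nonneg (by positivity)]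
        by_cases hφi : φ (x i) = 0
        · rw [hφi] at hv
          simp only [mul_zero, zero_sub, norm_neg] at hv
          rw [hwn] at hv
          linarith
        · have hiF : i ∈ F := by simp [hF, hφi]
          have hmi : m ≤ ‖φ (x i)‖ := Finset.inf'_le _ hiF
          have hlow : m ≤ ‖γ * lam ^ n * φ (x i)‖ := by
            rw [norm_mul, norm_mul, norm_pow]
            calc m ≤ ‖φ (x i)‖ := hmi
              _ = 1 * 1 * ‖φ (x i)‖ := by ring
              _ ≤ ‖γ‖ * ‖lam‖ ^ n * ‖φ (x i)‖ := by
                  gcongr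
                  exact one_le_pow₀ hl
          have := norm_sub_norm_le (γ * lam ^ n * φ (x i)) ((m/2 : ℝ) : ℂ)
          rw [hwn] at this
          linarith
  refine ⟨h1, ?_⟩
  intro p hp
  by_contra hd
  set P : X →L[ℂ] X := Polynomial.aeval T p with hP
  obtain ⟨x0, hx0⟩ : ∃ x0, x0 ∉ closure (Set.range ⇑P) := by
    by_contra hc; push_neg at hc; exact hd hc
  set K : Submodule ℂ X := (LinearMap.range (P : X →ₗ[ℂ] X)).topologicalClosure with hK
  have hKc : (K : Set X) = closure (Set.range ⇑P) := by
    rw [hK, Submodule.topologicalClosure_coe]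
    rfl
  have hclosed : IsClosed (K : Set X) := Submodule.isClosed_topologicalClosure _
  have hconv : Convex ℝ (K : Set X) := by
    have := (Submodule.restrictScalars ℝ K).convex
    simpa using this
  have hx0K : x0 ∉ (K : Set X) := by rw [hKc]; exact hx0
  obtain ⟨f, u, hfK, hfx0⟩ :=
    RCLike.geometric_hahn_banach_closed_point (𝕜 := ℂ) hconv hclosed hx0K
  have hu0 : 0 < u := by
    have := hfK 0 (K.zero_mem)
    simpa using this
  have hf0 : ∀ y ∈ K, f y = 0 := by
    intro y hy
    by_contra hfy
    set c : ℂ := ((|u| + 1 : ℝ) : ℂ) / f y with hc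
    have hcy : c • y ∈ K := K.smul_mem c hy
    have : f (c • y) = ((|u| + 1 : ℝ) : ℂ) := by
      rw [map_smul, smul_eq_mul, hc, div_mul_cancel₀ _ hfy]
    have h2 := hfK (c • y) hcy
    rw [this] at h2
    have h2' : |u| + 1 < u := by
      rw [RCLike.re_to_complex, Complex.ofReal_re] at h2
      exact h2
    have : u ≤ |u| := le_abs_self u
    linarith [h2']
  have hfP : ∀ z : X, f (P z) = 0 := by
    intro z
    exact hf0 _ (Submodule.le_topologicalClosure _ (LinearMap.mem_range_self _ z))
  have hfne : f ≠ 0 := by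
    intro hf
    rw [hf] at hfx0
    simp at hfx0
    linarith
  -- factor p
  have hsplit : p = Polynomial.C p.leadingCoeff *
      (p.roots.map fun a => Polynomial.X - Polynomial.C a).prod :=
    (IsAlgClosed.splits p).eq_prod_roots
  have hlc : p.leadingCoeff ≠ 0 := Polynomial.leadingCoeff_ne_zero.mpr hp
  have hQ0 : ∀ z : X, f ((Polynomial.aeval T
      ((p.roots.map fun r => Polynomial.X - Polynomial.C r).prod) : X →L[ℂ] X) z) = 0 := by
    intro z
    have h2 := hfP z
    rw [hP] at h2
    conv_lhs at h2 => rw [hsplit]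
    rw [map_mul, Polynomial.aeval_C, ContinuousLinearMap.mul_apply,
      Algebra.algebraMap_eq_smul_one, ContinuousLinearMap.smul_apply,
      ContinuousLinearMap.one_apply, map_smul, smul_eq_mul] at h2
    exact (mul_eq_zero.mp h2).resolve_left hlc
  obtain ⟨lam, ψ, hψ, heig⟩ := aux_eig T p.roots f hfne hQ0
  exact hψ (h1 lam ψ heig)
end

section
/- Let X be a complex Banach space and T a bounded operator on X with the property that p(T) has dense range for every non-zero polynomial p. Then for any x ∈ X and any non-zero polynomial p, the closure of p(T)(closure of orb(C,T)) equals the closure of orb(p(T)(C), T), where C = [1,b]𝕋 x; in particular the image under p(T) of a dense orbit set of C is dense. -/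
/-- If every non-zero polynomial in `T` has dense range, then for `C = [1,b]𝕋 x` the closure of
`p(T)(closure(orb(C,T)))` equals the closure of `orb(p(T)(C),T)`; in particular the image under
`p(T)` of a dense orbit set of `C` is dense. -/
theorem stmt_4 {X : Type*} [NormedAddCommGroup X] [NormedSpace ℂ X] [CompleteSpace X]
    (T : X →L[ℂ] X)
    (hT : ∀ p : Polynomial ℂ, p ≠ 0 → DenseRange (⇑(Polynomial.aeval T p : X →L[ℂ] X)))
    (b : ℝ) (hb : 1 ≤ b) (x : X) (p : Polynomial ℂ) (hp : p ≠ 0) :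
    (closure ((Polynomial.aeval T p : X →L[ℂ] X) ''
        (closure {y : X | ∃ γ : ℂ, 1 ≤ ‖γ‖ ∧ ‖γ‖ ≤ b ∧ ∃ n : ℕ, y = (T ^ n) (γ • x)})) =
      closure {y : X | ∃ γ : ℂ, 1 ≤ ‖γ‖ ∧ ‖γ‖ ≤ b ∧ ∃ n : ℕ,
          y = (T ^ n) (γ • (Polynomial.aeval T p : X →L[ℂ] X) x)}) ∧
    (Dense {y : X | ∃ γ : ℂ, 1 ≤ ‖γ‖ ∧ ‖γ‖ ≤ b ∧ ∃ n : ℕ, y = (T ^ n) (γ • x)} →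
      Dense ((Polynomial.aeval T p : X →L[ℂ] X) ''
        {y : X | ∃ γ : ℂ, 1 ≤ ‖γ‖ ∧ ‖γ‖ ≤ b ∧ ∃ n : ℕ, y = (T ^ n) (γ • x)})) := by
  set P : X →L[ℂ] X := (Polynomial.aeval T p : X →L[ℂ] X) with hP
  set S : Set X := {y : X | ∃ γ : ℂ, 1 ≤ ‖γ‖ ∧ ‖γ‖ ≤ b ∧ ∃ n : ℕ, y = (T ^ n) (γ • x)} with hS
  have hcomm : ∀ n : ℕ, P * T ^ n = T ^ n * P := by
    intro n
    have hX : (Polynomial.aeval T (Polynomial.X : Polynomial ℂ)) = T := Polynomial.aeval_X T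
    calc P * T ^ n = Polynomial.aeval T (p * Polynomial.X ^ n) := by
          rw [map_mul, map_pow, hX]
      _ = Polynomial.aeval T (Polynomial.X ^ n * p) := by ring_nf
      _ = T ^ n * P := by rw [map_mul, map_pow, hX]
  have hpt : ∀ (γ : ℂ) (n : ℕ), P ((T ^ n) (γ • x)) = (T ^ n) (γ • P x) := by
    intro γ n
    have := congrArg (fun (A : X →L[ℂ] X) => A (γ • x)) (hcomm n)
    simp only [ContinuousLinearMap.mul_apply] at this
    rw [this, map_smul]
  have himg : P '' S = {y : X | ∃ γ : ℂ, 1 ≤ ‖γ‖ ∧ ‖γ‖ ≤ b ∧ ∃ n : ℕ,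
      y = (T ^ n) (γ • P x)} := by
    ext y
    constructor
    · rintro ⟨z, ⟨γ, h1, h2, n, rfl⟩, rfl⟩
      exact ⟨γ, h1, h2, n, (hpt γ n).symm ▸ rfl⟩
    · rintro ⟨γ, h1, h2, n, rfl⟩
      exact ⟨(T ^ n) (γ • x), ⟨γ, h1, h2, n, rfl⟩, hpt γ n⟩
  have hkey : closure (P '' closure S) = closure (P '' S) := by
    apply subset_antisymm
    · apply closure_minimal _ isClosed_closure
      calc P '' closure S ⊆ closure (P '' S) :=
            image_closure_subset_closure_image P.continuous
        _ ⊆ closure (P '' S) := subset_rfl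
    · exact closure_mono (Set.image_mono subset_closure)
  constructor
  · rw [hkey, himg]
  · intro hdense
    have : Set.range P ⊆ closure (P '' S) := by
      rintro _ ⟨z, rfl⟩
      have hz : z ∈ closure S := hdense z
      exact image_closure_subset_closure_image P.continuous ⟨z, hz, rfl⟩
    have := closure_mono this
    rw [closure_closure] at this
    exact fun y => this ((hT p hp).closure_eq ▸ Set.mem_univ y : y ∈ closure (Set.range P))
end

section
/- Let H be an infinite-dimensional separable complex Hilbert space and (x_n)_{n≥0} a linearly independent sequence in H. Let f₀ ∈ H be a unit vector with x_n ∉ ℂf₀ and ⟨x_n, f₀⟩ ≠ 0 for all n. Then f₀ can be completed to an orthonormal basis (f_m)_{m≥0} of F := closure(span(f₀; x_n, n ≥ 0)) such that ⟨x_n, f_m⟩ ≠ 0 for all n, m ≥ 0. -/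
set_option linter.unusedSectionVars false
set_option maxHeartbeats 1000000

open Submodule Metric Set

noncomputable section

variable {H : Type*} [NormedAddCommGroup H] [InnerProductSpace ℂ H] [CompleteSpace H]

/-- Baire-category selection lemma. -/
lemma baire_select {ι : Type*} [Countable ι] (W : Submodule ℂ H) (hWc : IsClosed (W : Set H))
    (T : ι → Submodule ℂ H) (hTc : ∀ k, IsClosed ((T k : Set H)))
    (hT : ∀ k, ¬ W ≤ T k) (g : H) (hg : g ∈ W) (hgn : ‖g‖ = 1)
    (ε : ℝ) (hε : 0 < ε) :
    ∃ f : H, f ∈ W ∧ ‖f‖ = 1 ∧ ‖f - g‖ < ε ∧ ∀ k, f ∉ T k := by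
  haveI : CompleteSpace W := hWc.completeSpace_coe
  haveI : BaireSpace W := inferInstance
  set A : ι → Set W := fun k => ((↑) : W → H) ⁻¹' (T k) with hA
  have hAc : ∀ k, IsClosed (A k) := fun k => (hTc k).preimage continuous_subtype_val
  have hAint : ∀ k, interior (A k) = ∅ := by
    intro k
    by_contra h
    have hne : (interior (A k)).Nonempty := nonempty_iff_ne_empty.2 h
    have : ((T k).comap W.subtype) = ⊤ := Submodule.eq_top_of_nonempty_interior' _ hne
    exact hT k fun w hw => by
      have : (⟨w, hw⟩ : W) ∈ ((T k).comap W.subtype) := this ▸ Submodule.mem_top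
      simpa using this
  have hdense : Dense (⋂ k, (A k)ᶜ) := by
    refine dense_iInter_of_isOpen (fun k => (hAc k).isOpen_compl) (fun k => ?_)
    exact interior_eq_empty_iff_dense_compl.1 (hAint k)
  set δ : ℝ := min (ε / 3) (1 / 2) with hδ
  have hδ0 : 0 < δ := lt_min (by linarith) (by norm_num)
  obtain ⟨w, hwD, hwB⟩ := hdense.exists_mem_open Metric.isOpen_ball
    ⟨⟨g, hg⟩, Metric.mem_ball_self hδ0⟩
  have hwg : ‖(w : H) - g‖ < δ := by
    have := Metric.mem_ball.1 hwB
    rwa [Subtype.dist_eq, dist_eq_norm] at this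
  have hwnorm : (1 : ℝ) / 2 ≤ ‖(w : H)‖ := by
    have h1 : ‖g‖ - ‖(w : H)‖ ≤ ‖(w : H) - g‖ := by
      simpa [norm_sub_rev] using norm_sub_norm_le g (w : H)
    have hδle : δ ≤ 1 / 2 := min_le_right _ _
    nlinarith [hwg, hgn]
  have hw0 : (w : H) ≠ 0 := by
    intro h
    rw [h, norm_zero] at hwnorm; norm_num at hwnorm
  refine ⟨‖(w : H)‖⁻¹ • (w : H), W.smul_mem _ w.2, ?_, ?_, ?_⟩
  · rw [norm_smul, norm_inv, norm_norm, inv_mul_cancel₀ (norm_ne_zero_iff.2 hw0)]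
  · have hfw : ‖‖(w : H)‖⁻¹ • (w : H) - (w : H)‖ = |1 - ‖(w : H)‖| := by
      rw [show ‖(w:H)‖⁻¹ • (w:H) - (w:H) = (‖(w:H)‖⁻¹ - 1) • (w:H) by
        rw [sub_smul, one_smul], norm_smul, Real.norm_eq_abs]
      have : |‖(w:H)‖⁻¹ - 1| * ‖(w:H)‖ = |(‖(w:H)‖⁻¹ - 1) * ‖(w:H)‖| := by
        rw [abs_mul, abs_of_nonneg (norm_nonneg _)]
      rw [this, sub_mul, inv_mul_cancel₀ (norm_ne_zero_iff.2 hw0), one_mul, abs_sub_comm]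
    have h1 : |1 - ‖(w : H)‖| ≤ ‖(w : H) - g‖ := by
      rw [← hgn]
      have := abs_norm_sub_norm_le g (w : H)
      rwa [norm_sub_rev] at this
    calc ‖‖(w : H)‖⁻¹ • (w : H) - g‖
        ≤ ‖‖(w : H)‖⁻¹ • (w : H) - (w : H)‖ + ‖(w : H) - g‖ :=
          norm_sub_le_norm_sub_add_norm_sub _ _ _
      _ < δ + δ := by rw [hfw]; exact add_lt_add (h1.trans_lt hwg) hwg
      _ ≤ ε / 3 + ε / 3 := add_le_add (min_le_left _ _) (min_le_left _ _)
      _ < ε := by linarith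
  · intro k hk
    have hw : (w : H) ∈ T k := by
      have h2 : (w : H) = ‖(w : H)‖ • (‖(w : H)‖⁻¹ • (w : H)) := by
        rw [smul_smul, mul_inv_cancel₀ (norm_ne_zero_iff.2 hw0), one_smul]
      rw [h2]
      exact (T k).smul_mem _ hk
    exact (Set.mem_iInter.1 hwD k) hw

lemma range_snoc' {n : ℕ} (v : Fin n → H) (a : H) :
    Set.range (Fin.snoc v a : Fin (n + 1) → H) = insert a (Set.range v) := by
  ext y
  constructor
  · rintro ⟨i, rfl⟩
    refine Fin.lastCases ?_ ?_ i
    · simp [Fin.snoc_last]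
    · intro j; simp [Fin.snoc_castSucc]
  · rintro (rfl | ⟨i, rfl⟩)
    · exact ⟨Fin.last n, Fin.snoc_last _ _⟩
    · exact ⟨Fin.castSucc i, Fin.snoc_castSucc _ _ _⟩

def Fsub (x : ℕ → H) (f₀ : H) : Submodule ℂ H :=
  (span ℂ (insert f₀ (Set.range x))).topologicalClosure

lemma xmem_Fsub (x : ℕ → H) (f₀ : H) (n : ℕ) : x n ∈ Fsub x f₀ :=
  le_topologicalClosure _ (subset_span (Set.mem_insert_of_mem _ ⟨n, rfl⟩))

lemma not_Fsub_le (x : ℕ → H) (f₀ : H) (hx : LinearIndependent ℂ x)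
    (T : Submodule ℂ H) (hT : FiniteDimensional ℂ T) : ¬ Fsub x f₀ ≤ T := by
  intro hle
  have hxT : ∀ n, x n ∈ T := fun n => hle (xmem_Fsub x f₀ n)
  have hx' : LinearIndependent ℂ (fun n => (⟨x n, hxT n⟩ : T)) := by
    apply LinearIndependent.of_comp T.subtype
    convert hx
    rfl
  haveI := hx'.finite
  exact not_finite ℕ

lemma f₀mem_Fsub (x : ℕ → H) (f₀ : H) : f₀ ∈ Fsub x f₀ :=
  le_topologicalClosure _ (subset_span (Set.mem_insert _ _))

def Good (x : ℕ → H) (f₀ : H) (e : ℕ → H) (m : ℕ) (v : Fin (m + 1) → H) : Prop :=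
  (∀ i, v i ∈ Fsub x f₀) ∧ Orthonormal ℂ v ∧ v 0 = f₀ ∧
    (∀ n i, (inner ℂ (x n) (v i) : ℂ) ≠ 0) ∧
    (∀ n, x n ∉ span ℂ (Set.range v)) ∧
    ∀ j, j + 2 ≤ m + 1 →
      Metric.infDist (e (Nat.unpair j).1) ((span ℂ (Set.range v) : Submodule ℂ H) : Set H) ≤
        ‖e (Nat.unpair j).1‖ / (j + 1)

lemma good_base (x : ℕ → H) (f₀ : H) (e : ℕ → H) (hf₀ : ‖f₀‖ = 1)
    (hspan : ∀ n, ∀ c : ℂ, x n ≠ c • f₀)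
    (hinner : ∀ n, (inner ℂ (x n) f₀ : ℂ) ≠ 0) :
    Good x f₀ e 0 (fun _ => f₀) := by
  refine ⟨fun _ => f₀mem_Fsub x f₀, ?_, rfl, fun n _ => hinner n, ?_, by omega⟩
  · rw [orthonormal_iff_ite]
    intro i j
    rw [Fin.fin_one_eq_zero i, Fin.fin_one_eq_zero j, if_pos rfl,
      inner_self_eq_norm_sq_to_K, hf₀]
    norm_num
  · intro n hn
    rw [Set.range_const] at hn
    obtain ⟨c, hc⟩ := Submodule.mem_span_singleton.1 hn
    exact hspan n c hc.symm

lemma good_step (x : ℕ → H) (f₀ : H) (e : ℕ → H) (hx : LinearIndependent ℂ x)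
    (he : ∀ k, e k ∈ Fsub x f₀) (m : ℕ) (v : Fin (m + 1) → H) (hv : Good x f₀ e m v) :
    ∃ w : H, Good x f₀ e (m + 1) (Fin.snoc v w) := by
  obtain ⟨hvF, hon, hv0, hvinner, hvnotin, happrox⟩ := hv
  set F := Fsub x f₀ with hF
  have hFc : IsClosed (F : Set H) := Submodule.isClosed_topologicalClosure _
  have hxF : ∀ n, x n ∈ F := xmem_Fsub x f₀
  set S : Submodule ℂ H := span ℂ (Set.range v) with hS
  haveI : FiniteDimensional ℂ S := FiniteDimensional.span_of_finite ℂ (Set.finite_range v)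
  have hSF : S ≤ F := span_le.2 (Set.range_subset_iff.2 hvF)
  set W : Submodule ℂ H := F ⊓ Sᗮ with hW
  have hyp : ∀ z, z ∈ F → z - (orthogonalProjection S z : H) ∈ W := fun z hz =>
    Submodule.mem_inf.2 ⟨F.sub_mem hz (hSF (orthogonalProjection S z).2),
      sub_starProjection_mem_orthogonal (K := S) z⟩
  have hWc : IsClosed (W : Set H) := by
    rw [hW, Submodule.coe_inf]
    exact hFc.inter S.isClosed_orthogonal
  have hWF : W ≤ F := inf_le_left
  have hWS : W ≤ Sᗮ := inf_le_right
  have hWproper : ∀ T : Submodule ℂ H, FiniteDimensional ℂ T → ¬ W ≤ T := by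
    intro T hT hle
    have hFle : F ≤ S ⊔ T := by
      intro z hz
      have h2 : z = (orthogonalProjection S z : H) + (z - orthogonalProjection S z) := by abel
      rw [h2]
      exact Submodule.add_mem _ (Submodule.mem_sup_left (orthogonalProjection S z).2)
        (Submodule.mem_sup_right (hle (hyp z hz)))
    haveI : FiniteDimensional ℂ (S ⊔ T : Submodule ℂ H) := Submodule.finiteDimensional_sup S T
    exact not_Fsub_le x f₀ hx _ inferInstance hFle
  -- the target vector and its residual
  set t := e (Nat.unpair m).1 with ht
  set u := t - (orthogonalProjection S t : H) with hu
  have huW : u ∈ W := hyp t (he _)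
  obtain ⟨g, hgW, hgn, hug⟩ : ∃ g, g ∈ W ∧ ‖g‖ = 1 ∧ u = ‖u‖ • g := by
    by_cases h0 : u = 0
    · have hWne : W ≠ ⊥ := by
        intro hbot
        exact hWproper ⊥ inferInstance (hbot ▸ le_refl W)
      obtain ⟨w0, hw0W, hw0⟩ := (Submodule.ne_bot_iff W).1 hWne
      refine ⟨‖w0‖⁻¹ • w0, W.smul_mem _ hw0W, ?_, by simp [h0]⟩
      rw [norm_smul, norm_inv, norm_norm, inv_mul_cancel₀ (norm_ne_zero_iff.2 hw0)]
    · refine ⟨‖u‖⁻¹ • u, W.smul_mem _ huW, ?_, ?_⟩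
      · rw [norm_smul, norm_inv, norm_norm, inv_mul_cancel₀ (norm_ne_zero_iff.2 h0)]
      · rw [smul_smul, mul_inv_cancel₀ (norm_ne_zero_iff.2 h0), one_smul]
  -- the countable family of closed submodules to avoid
  set T : ℕ ⊕ ℕ → Submodule ℂ H := fun k =>
    Sum.elim (fun n => LinearMap.ker (innerSL ℂ (x n) : H →ₗ[ℂ] ℂ))
      (fun n => span ℂ (insert (x n) (Set.range v))) k with hT
  have hTfin : ∀ n, FiniteDimensional ℂ (span ℂ (insert (x n) (Set.range v)) : Submodule ℂ H) :=
    fun n => FiniteDimensional.span_of_finite ℂ ((Set.finite_range v).insert _)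
  have hTc : ∀ k, IsClosed ((T k : Set H)) := by
    rintro (n | n)
    · exact ContinuousLinearMap.isClosed_ker (innerSL ℂ (x n))
    · haveI := hTfin n
      show IsClosed ((span ℂ (insert (x n) (Set.range v)) : Submodule ℂ H) : Set H)
      exact Submodule.closed_of_finiteDimensional _
  have hTproper : ∀ k, ¬ W ≤ T k := by
    rintro (n | n)
    · intro hle
      set wn := x n - (orthogonalProjection S (x n) : H) with hwn
      have hwnW : wn ∈ W := hyp _ (hxF n)
      have hwn0 : wn ≠ 0 := by
        intro h
        apply hvnotin n
        have : x n = (orthogonalProjection S (x n) : H) := by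
          have := sub_eq_zero.1 h; exact this
        rw [this]; exact (orthogonalProjection S (x n)).2
      have hvanish : (inner ℂ (x n) wn : ℂ) = 0 := by
        have h3 : wn ∈ LinearMap.ker (innerSL ℂ (x n) : H →ₗ[ℂ] ℂ) := hle hwnW
        rw [LinearMap.mem_ker] at h3
        simpa using h3
      have hxn : x n = (orthogonalProjection S (x n) : H) + wn := by rw [hwn]; abel
      rw [hxn, inner_add_left] at hvanish
      have hperp : (inner ℂ ((orthogonalProjection S (x n) : H)) wn : ℂ) = 0 :=
        (Submodule.mem_orthogonal S wn).1 (hWS hwnW) _ (orthogonalProjection S (x n)).2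
      rw [hperp, zero_add] at hvanish
      exact inner_self_ne_zero.2 hwn0 hvanish
    · intro hle
      exact hWproper (span ℂ (insert (x n) (Set.range v))) (hTfin n) hle
  obtain ⟨f', hf'W, hf'n, hf'g, hf'T⟩ := baire_select W hWc T hTc hTproper g hgW hgn
    (1 / (m + 1)) (by positivity)
  have hf'S : f' ∈ Sᗮ := hWS hf'W
  have hf'inner : ∀ n, (inner ℂ (x n) f' : ℂ) ≠ 0 := by
    intro n h
    exact hf'T (Sum.inl n) (LinearMap.mem_ker.2 (by simpa using h))
  have hrange : Set.range (Fin.snoc v f' : Fin (m + 2) → H) = insert f' (Set.range v) :=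
    range_snoc' v f'
  have hspan_le : (S : Submodule ℂ H) ≤ span ℂ (Set.range (Fin.snoc v f' : Fin (m + 2) → H)) := by
    rw [hrange]; exact span_mono (Set.subset_insert _ _)
  have hf'mem : f' ∈ span ℂ (Set.range (Fin.snoc v f' : Fin (m + 2) → H)) := by
    rw [hrange]; exact subset_span (Set.mem_insert _ _)
  refine ⟨f', ?_, ?_, ?_, ?_, ?_, ?_⟩
  · -- membership in F
    intro i
    refine Fin.lastCases ?_ ?_ i
    · rw [Fin.snoc_last]; exact hWF hf'W
    · intro j; rw [Fin.snoc_castSucc]; exact hvF j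
  · -- orthonormality
    rw [orthonormal_iff_ite]
    have hperp : ∀ i : Fin (m + 1), (inner ℂ (v i) f' : ℂ) = 0 := fun i =>
      (Submodule.mem_orthogonal S f').1 hf'S _ (subset_span ⟨i, rfl⟩)
    intro i j
    refine Fin.lastCases ?_ ?_ i
    · refine Fin.lastCases ?_ ?_ j
      · rw [Fin.snoc_last, if_pos rfl, inner_self_eq_norm_sq_to_K, hf'n]; norm_num
      · intro jj
        rw [Fin.snoc_last, Fin.snoc_castSucc,
          if_neg (Fin.castSucc_lt_last jj).ne',
          inner_eq_zero_symm.2 (hperp jj)]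
    · intro ii
      refine Fin.lastCases ?_ ?_ j
      · rw [Fin.snoc_last, Fin.snoc_castSucc, if_neg (Fin.castSucc_lt_last ii).ne,
          hperp ii]
      · intro jj
        simp only [Fin.snoc_castSucc, Fin.castSucc_inj]
        exact orthonormal_iff_ite.1 hon ii jj
  · -- first vector is f₀
    have h0 : ((0 : Fin (m + 2))) = Fin.castSucc (0 : Fin (m + 1)) := by simp
    rw [h0, Fin.snoc_castSucc, hv0]
  · -- nonvanishing inner products
    intro n i
    refine Fin.lastCases ?_ ?_ i
    · rw [Fin.snoc_last]; exact hf'inner n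
    · intro j; rw [Fin.snoc_castSucc]; exact hvinner n j
  · -- x n not in the span
    intro n hn
    rw [hrange, span_insert] at hn
    obtain ⟨y, hy, z, hz, hyz⟩ := Submodule.mem_sup.1 hn
    obtain ⟨c, rfl⟩ := Submodule.mem_span_singleton.1 hy
    by_cases hc : c = 0
    · apply hvnotin n
      rw [hc, zero_smul, zero_add] at hyz
      rw [← hyz]; exact hz
    · apply hf'T (Sum.inr n)
      have hxz : x n - z = c • f' := by rw [← hyz, add_sub_cancel_right]
      have hf'eq : f' = c⁻¹ • (x n - z) := by
        rw [hxz, smul_smul, inv_mul_cancel₀ hc, one_smul]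
      rw [hf'eq]
      refine Submodule.smul_mem _ _ (Submodule.sub_mem _ ?_ ?_)
      · exact subset_span (Set.mem_insert _ _)
      · exact span_mono (Set.subset_insert _ _) hz
  · -- approximation property
    intro j hj
    rcases Nat.lt_or_ge j m with hjm | hjm
    · -- old indices
      have hold := happrox j (by omega)
      refine le_trans (Metric.infDist_le_infDist_of_subset ?_ ?_) hold
      · exact_mod_cast hspan_le
      · exact ⟨0, Submodule.zero_mem S⟩
    · -- j = m
      have hjm' : j = m := by omega
      rw [hjm']
      have hpt : (orthogonalProjection S t : H) + ‖u‖ • f' ∈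
          span ℂ (Set.range (Fin.snoc v f' : Fin (m + 2) → H)) := by
        refine Submodule.add_mem _ (hspan_le (orthogonalProjection S t).2) ?_
        exact Submodule.smul_mem _ _ hf'mem
      refine le_trans (Metric.infDist_le_dist_of_mem hpt) ?_
      rw [dist_eq_norm]
      have heq : t - ((orthogonalProjection S t : H) + ‖u‖ • f') = ‖u‖ • g - ‖u‖ • f' := by
        rw [← hug]; rw [hu]; abel
      rw [heq, ← smul_sub, norm_smul, norm_norm]
      have hubound : ‖u‖ ≤ ‖t‖ := by
        have hperp : (inner ℂ ((orthogonalProjection S t : H)) u : ℂ) = 0 :=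
          (Submodule.mem_orthogonal S u).1 (hWS huW) _ (orthogonalProjection S t).2
        have := norm_add_sq_eq_norm_sq_add_norm_sq_of_inner_eq_zero
          ((orthogonalProjection S t : H)) u hperp
        have hteq : (orthogonalProjection S t : H) + u = t := by rw [hu]; abel
        rw [hteq] at this
        nlinarith [norm_nonneg u, norm_nonneg t, norm_nonneg ((orthogonalProjection S t : H))]
      have hgf : ‖g - f'‖ ≤ 1 / ((m : ℝ) + 1) := by rw [norm_sub_rev]; exact hf'g.le
      calc ‖u‖ * ‖g - f'‖ ≤ ‖t‖ * (1 / ((m : ℝ) + 1)) := by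
            apply mul_le_mul hubound hgf (norm_nonneg _) (norm_nonneg _)
        _ = ‖t‖ / ((m : ℝ) + 1) := by ring

noncomputable def seqAux (x : ℕ → H) (f₀ : H) (e : ℕ → H) (hx : LinearIndependent ℂ x)
    (hf₀ : ‖f₀‖ = 1) (hspan : ∀ n, ∀ c : ℂ, x n ≠ c • f₀)
    (hinner : ∀ n, (inner ℂ (x n) f₀ : ℂ) ≠ 0) (he : ∀ k, e k ∈ Fsub x f₀) :
    ∀ m : ℕ, {v : Fin (m + 1) → H // Good x f₀ e m v}
  | 0 => ⟨fun _ => f₀, good_base x f₀ e hf₀ hspan hinner⟩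
  | (m + 1) =>
    ⟨Fin.snoc (seqAux x f₀ e hx hf₀ hspan hinner he m).1
        (good_step x f₀ e hx he m _ (seqAux x f₀ e hx hf₀ hspan hinner he m).2).choose,
      (good_step x f₀ e hx he m _ (seqAux x f₀ e hx hf₀ hspan hinner he m).2).choose_spec⟩

end

/-- Lemma "lem1-inf-case": completion of `f₀` to an orthonormal basis of
`F = closure(span(f₀; xₙ, n ≥ 0))` all of whose elements have non-zero inner product with
every `xₙ`. -/
theorem stmt_6 {H : Type*} [NormedAddCommGroup H] [InnerProductSpace ℂ H] [CompleteSpace H]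
    [TopologicalSpace.SeparableSpace H]
    (x : ℕ → H) (hx : LinearIndependent ℂ x) (f₀ : H) (hf₀ : ‖f₀‖ = 1)
    (hspan : ∀ n, ∀ c : ℂ, x n ≠ c • f₀)
    (hinner : ∀ n, (inner ℂ (x n) f₀ : ℂ) ≠ 0) :
    ∃ f : ℕ → H, f 0 = f₀ ∧ Orthonormal ℂ f ∧
      (Submodule.span ℂ (Set.range f)).topologicalClosure =
        (Submodule.span ℂ (insert f₀ (Set.range x))).topologicalClosure ∧
      ∀ n m, (inner ℂ (x n) (f m) : ℂ) ≠ 0 := by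
  classical
  set F : Submodule ℂ H := Fsub x f₀ with hFdef
  have hFc : IsClosed (F : Set H) := Submodule.isClosed_topologicalClosure _
  -- a dense sequence in F
  haveI : SecondCountableTopology H := UniformSpace.secondCountable_of_separable H
  haveI : Nonempty ↥(F : Set H) := ⟨⟨0, Submodule.zero_mem F⟩⟩
  set e' : ℕ → (F : Set H) := TopologicalSpace.denseSeq (F : Set H) with he'def
  have he'dense : DenseRange e' := TopologicalSpace.denseRange_denseSeq _
  set e : ℕ → H := fun k => (e' k : H) with hedef
  have he : ∀ k, e k ∈ F := fun k => (e' k).2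
  -- the recursive construction
  set σ := seqAux x f₀ e hx hf₀ hspan hinner he with hσdef
  have hcompat : ∀ m (i : Fin (m + 1)), (σ (m + 1)).1 i.castSucc = (σ m).1 i := by
    intro m i
    show (Fin.snoc (σ m).1 _ : Fin (m + 2) → H) i.castSucc = (σ m).1 i
    exact Fin.snoc_castSucc _ _ _
  set f : ℕ → H := fun n => (σ n).1 (Fin.last n) with hfdef
  have hagree : ∀ m (i : Fin (m + 1)), (σ m).1 i = f (i : ℕ) := by
    intro m
    induction m with
    | zero =>
      intro i
      have h1 : i = Fin.last 0 := by omega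
      rw [h1]; rfl
    | succ m ih =>
      intro i
      refine Fin.lastCases ?_ ?_ i
      · rfl
      · intro j
        rw [hcompat m j, ih j]
        rfl
  -- extract the Good components
  have hfF : ∀ n, f n ∈ F := fun n => (σ n).2.1 (Fin.last n)
  have hf0 : f 0 = f₀ := ((σ 0).2.2.2.1 : (σ 0).1 0 = f₀)
  have hON : Orthonormal ℂ f := by
    rw [orthonormal_iff_ite]
    intro i j
    have hi : i < max i j + 1 := by omega
    have hj : j < max i j + 1 := by omega
    have h := orthonormal_iff_ite.1 (σ (max i j)).2.2.1 ⟨i, hi⟩ ⟨j, hj⟩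
    rw [hagree _ ⟨i, hi⟩, hagree _ ⟨j, hj⟩] at h
    simpa [Fin.ext_iff] using h
  have hINNER : ∀ n m, (inner ℂ (x n) (f m) : ℂ) ≠ 0 := by
    intro n m
    have h := (σ m).2.2.2.2.1 n (Fin.last m)
    exact h
  -- the closure of the span of f equals F
  have hCle : (span ℂ (Set.range f)).topologicalClosure ≤ F :=
    Submodule.topologicalClosure_minimal _ (span_le.2 (Set.range_subset_iff.2 hfF)) hFc
  have hspanf_ne : ((span ℂ (Set.range f) : Submodule ℂ H) : Set H).Nonempty :=
    ⟨0, Submodule.zero_mem _⟩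
  have heC : ∀ k, e k ∈ (span ℂ (Set.range f)).topologicalClosure := by
    intro k
    have hinf : Metric.infDist (e k) ((span ℂ (Set.range f) : Submodule ℂ H) : Set H) = 0 := by
      have hle : ∀ δ : ℝ, 0 < δ →
          Metric.infDist (e k) ((span ℂ (Set.range f) : Submodule ℂ H) : Set H) ≤ δ := by
        intro δ hδ
        obtain ⟨j, hjgt⟩ := exists_nat_gt (‖e k‖ / δ)
        set M := Nat.pair k j with hM
        have hgood := (σ (M + 1)).2.2.2.2.2.2 M (by omega)
        rw [Nat.unpair_pair] at hgood
        have hsub : ((span ℂ (Set.range (σ (M + 1)).1) : Submodule ℂ H) : Set H) ⊆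
            ((span ℂ (Set.range f) : Submodule ℂ H) : Set H) := by
          have : Set.range (σ (M + 1)).1 ⊆ Set.range f := by
            rintro y ⟨i, rfl⟩
            exact ⟨(i : ℕ), (hagree _ i).symm⟩
          exact_mod_cast span_mono this
        have h1 : Metric.infDist (e k) ((span ℂ (Set.range f) : Submodule ℂ H) : Set H) ≤
            ‖e k‖ / ((M : ℝ) + 1) :=
          le_trans (Metric.infDist_le_infDist_of_subset hsub ⟨0, Submodule.zero_mem _⟩) hgood
        refine h1.trans ?_
        have hjM : (j : ℝ) ≤ (M : ℝ) + 1 := by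
          have := Nat.right_le_pair k j
          exact_mod_cast Nat.le_succ_of_le this
        have hM1 : (0 : ℝ) < (M : ℝ) + 1 := by positivity
        rw [div_le_iff₀ hM1]
        have h2 : ‖e k‖ < δ * j := by
          rcases Nat.eq_zero_or_pos j with rfl | hjpos
          · exfalso
            have : ‖e k‖ / δ < 0 := by exact_mod_cast hjgt
            have := div_nonneg (norm_nonneg (e k)) hδ.le
            linarith
          · rw [← div_lt_iff₀' hδ] at *
            calc ‖e k‖ / δ < j := hjgt
              _ = j := rfl
        calc ‖e k‖ ≤ δ * j := h2.le
          _ ≤ δ * ((M : ℝ) + 1) := by nlinarith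
      have h0 : (0 : ℝ) ≤ Metric.infDist (e k)
          ((span ℂ (Set.range f) : Submodule ℂ H) : Set H) := Metric.infDist_nonneg
      by_contra hne
      have hpos : 0 < Metric.infDist (e k)
          ((span ℂ (Set.range f) : Submodule ℂ H) : Set H) := lt_of_le_of_ne h0 (Ne.symm hne)
      have := hle _ (half_pos hpos)
      linarith
    have := (Metric.mem_closure_iff_infDist_zero hspanf_ne).2 hinf
    rwa [← Submodule.topologicalClosure_coe] at this
  have hFle : F ≤ (span ℂ (Set.range f)).topologicalClosure := by
    intro z hz
    have hzc : z ∈ closure (Set.range e) := by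
      rw [Metric.mem_closure_iff]
      intro ε hε
      obtain ⟨k, hk⟩ := Metric.denseRange_iff.1 he'dense ⟨z, hz⟩ ε hε
      exact ⟨e k, ⟨k, rfl⟩, by rwa [Subtype.dist_eq] at hk⟩
    have hsub : Set.range e ⊆ ((span ℂ (Set.range f)).topologicalClosure : Set H) := by
      rintro y ⟨k, rfl⟩; exact heC k
    have := closure_mono hsub hzc
    rwa [IsClosed.closure_eq (Submodule.isClosed_topologicalClosure _)] at this
  exact ⟨f, hf0, hON, le_antisymm hCle hFle, hINNER⟩
end

section
/- Let H be a separable complex Hilbert space and (x_n) a sequence of pairwise linearly independent vectors in H. Then there exist two orthonormal vectors f₀, f₁ in H such that for all n: x_n ∉ ℂf₀, x_n ∉ ℂf₁, ⟨x_n, f₀⟩ ≠ 0, ⟨x_n, f₁⟩ ≠ 0, and moreover the orthogonal projections P(x_n) onto span(f₀, f₁) are still pairwise linearly independent. -/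
open scoped ComplexConjugate

lemma core_exists {E : Type*} [NormedAddCommGroup E] [InnerProductSpace ℂ E] [CompleteSpace E]
    {ι : Type*} [Countable ι] [Nonempty ι] (w : ι → E) (hw : ∀ i, w i ≠ 0) :
    ∃ f : E, ‖f‖ = 1 ∧ ∀ i, (inner ℂ f (w i) : ℂ) ≠ 0 := by
  have hden : Dense (⋂ i, {f : E | (inner ℂ (w i) f : ℂ) ≠ 0}) := by
    apply dense_iInter_of_isOpen
    · intro i
      have : IsClosed {f : E | (inner ℂ (w i) f : ℂ) = 0} :=
        isClosed_eq (innerSL ℂ (w i)).continuous continuous_const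
      simpa [Set.compl_setOf] using this.isOpen_compl
    · intro i
      rw [dense_iff_inter_open]
      intro U hU hUne
      by_contra h
      push_neg at h
      have hsub : U ⊆ (LinearMap.ker (innerSL ℂ (w i) : E →ₗ[ℂ] ℂ) : Submodule ℂ E) := by
        intro f hf
        by_contra hf'
        have : f ∈ U ∩ {f : E | (inner ℂ (w i) f : ℂ) ≠ 0} :=
          ⟨hf, by simpa [LinearMap.mem_ker] using hf'⟩
        simp [h] at this
      have : (LinearMap.ker (innerSL ℂ (w i) : E →ₗ[ℂ] ℂ) : Submodule ℂ E) = ⊤ := by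
        apply Submodule.eq_top_of_nonempty_interior'
        obtain ⟨u, hu⟩ := hUne
        exact ⟨u, interior_maximal hsub hU hu⟩
      have : (inner ℂ (w i) (w i) : ℂ) = 0 := by
        have := this ▸ Submodule.mem_top (R := ℂ) (x := w i)
        simpa [LinearMap.mem_ker] using this
      exact hw i (inner_self_eq_zero.mp this)
  obtain ⟨g, hg⟩ := hden.nonempty
  simp only [Set.mem_iInter, Set.mem_setOf_eq] at hg
  have hg0 : g ≠ 0 := by
    intro h
    exact hg (Classical.arbitrary ι) (by simp [h])
  refine ⟨(‖g‖⁻¹ : ℂ) • g, ?_, ?_⟩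
  · rw [norm_smul]; simp [norm_ne_zero_iff.mpr hg0]
  · intro i
    have h1 : (inner ℂ g (w i) : ℂ) ≠ 0 := fun h => hg i (by rwa [inner_eq_zero_symm] at h)
    rw [inner_smul_left]
    simp [h1, Complex.ofReal_ne_zero, norm_eq_zero, hg0]


/-- Claim inside Lemma "lem2-inf-case": existence of an orthonormal pair `f₀, f₁` with non-zero
inner products against all `xₙ`, none of the `xₙ` on the lines `ℂf₀, ℂf₁`, and such that the
orthogonal projections of the `xₙ` onto `span(f₀,f₁)` remain pairwise independent. -/
theorem stmt_7 {H : Type*} [NormedAddCommGroup H] [InnerProductSpace ℂ H] [CompleteSpace H]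
    [TopologicalSpace.SeparableSpace H]
    (x : ℕ → H) (hx : ∀ n m, n ≠ m → LinearIndependent ℂ ![x n, x m]) :
    ∃ f₀ f₁ : H, ‖f₀‖ = 1 ∧ ‖f₁‖ = 1 ∧ (inner ℂ f₀ f₁ : ℂ) = 0 ∧
      (∀ n, ∀ c : ℂ, x n ≠ c • f₀) ∧ (∀ n, ∀ c : ℂ, x n ≠ c • f₁) ∧
      (∀ n, (inner ℂ (x n) f₀ : ℂ) ≠ 0) ∧ (∀ n, (inner ℂ (x n) f₁ : ℂ) ≠ 0) ∧
      (∀ n m, n ≠ m → LinearIndependent ℂ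
        ![(inner ℂ f₀ (x n) : ℂ) • f₀ + (inner ℂ f₁ (x n) : ℂ) • f₁,
          (inner ℂ f₀ (x m) : ℂ) • f₀ + (inner ℂ f₁ (x m) : ℂ) • f₁]) := by
  -- each xₙ is nonzero
  have hxne : ∀ n, x n ≠ 0 := by
    intro n
    have h := (hx n (n + 1) (by omega)).ne_zero 0
    simpa using h
  -- an auxiliary companion vector independent of x n
  set z : ℕ → H := fun n => if n = 0 then x 1 else x 0 with hz_def
  have hz : ∀ n, LinearIndependent ℂ ![x n, z n] := by
    intro n
    by_cases h : n = 0
    · subst h; simpa [hz_def] using hx 0 1 (by omega)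
    · simpa [hz_def, h] using hx n 0 h
  -- u n ⊥ x n, nonzero
  set u : ℕ → H := fun n =>
    z n - ((inner ℂ (x n) (z n) : ℂ) / ((‖x n‖ : ℂ) ^ 2)) • x n with hu_def
  have hxu : ∀ n, (inner ℂ (x n) (u n) : ℂ) = 0 := by
    intro n
    have hn : ((‖x n‖ : ℂ)) ^ 2 ≠ 0 := by
      simp [Complex.ofReal_ne_zero, norm_eq_zero, hxne n]
    simp only [hu_def, inner_sub_right, inner_smul_right, inner_self_eq_norm_sq_to_K]
    field_simp
    simp [div_self hn]
  have hune : ∀ n, u n ≠ 0 := by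
    intro n hn
    have h := (LinearIndependent.pair_iff.mp (hz n)
      (-((inner ℂ (x n) (z n) : ℂ) / ((‖x n‖ : ℂ) ^ 2))) 1 (by
        rw [neg_smul, one_smul, add_comm, ← sub_eq_add_neg]; exact hn)).2
    exact one_ne_zero h
  -- Step 1: choose f₀
  obtain ⟨f₀, hf₀norm, hf₀⟩ := core_exists (Sum.elim x u) (by
    rintro (n | n)
    · exact hxne n
    · exact hune n)
  have ha : ∀ n, (inner ℂ f₀ (x n) : ℂ) ≠ 0 := fun n => hf₀ (Sum.inl n)
  have hau : ∀ n, (inner ℂ f₀ (u n) : ℂ) ≠ 0 := fun n => hf₀ (Sum.inr n)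
  have hf₀f₀ : (inner ℂ f₀ f₀ : ℂ) = 1 := by
    rw [inner_self_eq_norm_sq_to_K, hf₀norm]; norm_num
  -- f₀ is not on any of the lines ℂ xₙ, i.e. xₙ ∉ ℂ f₀
  have hxf₀ : ∀ n, ∀ c : ℂ, x n ≠ c • f₀ := by
    intro n c hc
    have hc0 : c ≠ 0 := by
      rintro rfl; exact hxne n (by simpa using hc)
    have : f₀ = c⁻¹ • x n := by
      rw [hc, smul_smul, inv_mul_cancel₀ hc0, one_smul]
    have h0 : (inner ℂ f₀ (u n) : ℂ) = 0 := by
      rw [this, inner_smul_left, hxu n, mul_zero]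
    exact hau n h0
  -- Step 2: work in the orthogonal complement of f₀
  set K : Submodule ℂ H := (ℂ ∙ f₀)ᗮ with hK_def
  haveI : CompleteSpace K := (Submodule.isClosed_orthogonal _).completeSpace_coe
  set r : ℕ → H := fun n => x n - (inner ℂ f₀ (x n) : ℂ) • f₀ with hr_def
  have hrK : ∀ n, r n ∈ K := by
    intro n
    rw [hK_def, Submodule.mem_orthogonal_singleton_iff_inner_right]
    simp [hr_def, inner_sub_right, inner_smul_right, hf₀f₀, hf₀norm]
  have hrne : ∀ n, r n ≠ 0 := by
    intro n hn
    exact hxf₀ n (inner ℂ f₀ (x n)) (sub_eq_zero.mp hn)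
  set y : ℕ → ℕ → H := fun n m =>
    (inner ℂ f₀ (x n) : ℂ) • x m - (inner ℂ f₀ (x m) : ℂ) • x n with hy_def
  have hyK : ∀ n m, y n m ∈ K := by
    intro n m
    rw [hK_def, Submodule.mem_orthogonal_singleton_iff_inner_right]
    simp [hy_def, inner_sub_right, inner_smul_right]
    ring_nf
  have hyne : ∀ n m, n ≠ m → y n m ≠ 0 := by
    intro n m hnm hy0
    have h := (LinearIndependent.pair_iff.mp (hx n m hnm)
      (-(inner ℂ f₀ (x m) : ℂ)) (inner ℂ f₀ (x n)) (by
        rw [neg_smul, add_comm, ← sub_eq_add_neg]; exact hy0)).2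
    exact ha n h
  obtain ⟨g, hgnorm, hg⟩ := core_exists
    (ι := ℕ ⊕ {p : ℕ × ℕ // p.1 ≠ p.2})
    (E := K)
    (Sum.elim (fun n => ⟨r n, hrK n⟩) (fun p => ⟨y p.1.1 p.1.2, hyK _ _⟩))
    (by
      rintro (n | ⟨⟨n, m⟩, hnm⟩)
      · simpa [Submodule.mk_eq_zero] using hrne n
      · simpa [Submodule.mk_eq_zero] using hyne n m hnm)
  set f₁ : H := (g : H) with hf₁_def
  have hf₁norm : ‖f₁‖ = 1 := hgnorm
  have hf₀f₁ : (inner ℂ f₀ f₁ : ℂ) = 0 :=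
    Submodule.mem_orthogonal_singleton_iff_inner_right.mp g.2
  have hf₁f₀ : (inner ℂ f₁ f₀ : ℂ) = 0 := by
    rw [inner_eq_zero_symm]; exact hf₀f₁
  have hf₁f₁ : (inner ℂ f₁ f₁ : ℂ) = 1 := by
    rw [inner_self_eq_norm_sq_to_K, hf₁norm]; norm_num
  have hb' : ∀ n, (inner ℂ f₁ (x n) : ℂ) = inner ℂ f₁ (r n) := by
    intro n
    simp [hr_def, inner_sub_right, inner_smul_right, hf₁f₀]
  have hb : ∀ n, (inner ℂ f₁ (x n) : ℂ) ≠ 0 := by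
    intro n
    rw [hb' n]
    simpa [Submodule.coe_inner] using hg (Sum.inl n)
  have hD : ∀ n m, n ≠ m →
      (inner ℂ f₀ (x n) : ℂ) * inner ℂ f₁ (x m) - (inner ℂ f₀ (x m) : ℂ) * inner ℂ f₁ (x n) ≠ 0 := by
    intro n m hnm
    have h : (inner ℂ (g : H) (y n m) : ℂ) ≠ 0 := by
      simpa [Submodule.coe_inner] using hg (Sum.inr ⟨(n, m), hnm⟩)
    have : (inner ℂ (g : H) (y n m) : ℂ)
        = (inner ℂ f₀ (x n) : ℂ) * inner ℂ f₁ (x m) - (inner ℂ f₀ (x m) : ℂ) * inner ℂ f₁ (x n) := by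
      simp [hy_def, inner_sub_right, inner_smul_right, hf₁_def]
    rwa [this] at h
  refine ⟨f₀, f₁, hf₀norm, hf₁norm, hf₀f₁, hxf₀, ?_, ?_, ?_, ?_⟩
  · intro n c hc
    have : (inner ℂ f₀ (x n) : ℂ) = 0 := by
      rw [hc, inner_smul_right, hf₀f₁, mul_zero]
    exact ha n this
  · intro n
    rw [ne_eq, inner_eq_zero_symm]
    exact ha n
  · intro n
    rw [ne_eq, inner_eq_zero_symm]
    exact hb n
  · intro n m hnm
    rw [LinearIndependent.pair_iff]
    intro s t hst
    have h1 : s * inner ℂ f₀ (x n) + t * inner ℂ f₀ (x m) = 0 := by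
      have := congrArg (fun v => (inner ℂ f₀ v : ℂ)) hst
      simp only [inner_add_right, inner_smul_right, inner_zero_right, hf₀f₀, hf₀f₁] at this
      linear_combination this
    have h2 : s * inner ℂ f₁ (x n) + t * inner ℂ f₁ (x m) = 0 := by
      have := congrArg (fun v => (inner ℂ f₁ v : ℂ)) hst
      simp only [inner_add_right, inner_smul_right, inner_zero_right, hf₁f₀, hf₁f₁] at this
      linear_combination this
    have hDnm := hD n m hnm
    constructor
    · have hs : s * ((inner ℂ f₀ (x n) : ℂ) * inner ℂ f₁ (x m)
          - (inner ℂ f₀ (x m) : ℂ) * inner ℂ f₁ (x n)) = 0 := by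
        linear_combination (inner ℂ f₁ (x m) : ℂ) * h1 - (inner ℂ f₀ (x m) : ℂ) * h2
      exact (mul_eq_zero.mp hs).resolve_right hDnm
    · have ht : t * ((inner ℂ f₀ (x n) : ℂ) * inner ℂ f₁ (x m)
          - (inner ℂ f₀ (x m) : ℂ) * inner ℂ f₁ (x n)) = 0 := by
        linear_combination (inner ℂ f₀ (x n) : ℂ) * h2 - (inner ℂ f₁ (x n) : ℂ) * h1
      exact (mul_eq_zero.mp ht).resolve_right hDnm
end

section
/- Let H be a separable complex Hilbert space and (x_n) a sequence of linearly independent vectors in H. Then there is a subsequence (x_{n_k}) and a vector a ∈ H such that for all k, x_{n_k} ∉ ℂa, ⟨x_{n_k}, a⟩ ≠ 0, and either ⟨x_{n_k}, a⟩ → 0 or |⟨x_{n_k}, a⟩| → ∞ as k → ∞. -/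
set_option synthInstance.maxHeartbeats 200000

open Filter Topology

local notation "⟪" x ", " y "⟫" => @inner ℂ _ _ x y

/-- Baire-category selection: a point avoiding countably many closed sets with empty interior. -/
lemma baire_avoid {α : Type*} [TopologicalSpace α] [BaireSpace α] [Nonempty α]
    {ι : Type*} [Countable ι] (S : ι → Set α)
    (hcl : ∀ i, IsClosed (S i)) (hint : ∀ i, interior (S i) = ∅) :
    ∃ a, ∀ i, a ∉ S i := by
  have hd : Dense (⋂ i, (S i)ᶜ) := by
    refine dense_iInter_of_isOpen (fun i => (hcl i).isOpen_compl) (fun i => ?_)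
    exact interior_eq_empty_iff_dense_compl.1 (hint i)
  obtain ⟨a, ha⟩ := hd.nonempty
  exact ⟨a, by simpa [Set.mem_iInter] using ha⟩

/-- A proper submodule of a normed space over `ℂ` has empty interior. -/
lemma submodule_interior_empty {E : Type*} [NormedAddCommGroup E] [NormedSpace ℂ E]
    (p : Submodule ℂ E) (hp : p ≠ ⊤) : interior (p : Set E) = ∅ := by
  by_contra h
  exact hp (p.eq_top_of_nonempty_interior' (Set.nonempty_iff_ne_empty.2 h))

/-- Weak sequential compactness of bounded sequences in a separable Hilbert space. -/
lemma exists_weak_subseq {H : Type*} [NormedAddCommGroup H] [InnerProductSpace ℂ H]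
    [CompleteSpace H] [TopologicalSpace.SeparableSpace H]
    (x : ℕ → H) (C : ℝ) (hC : ∀ n, ‖x n‖ ≤ C) :
    ∃ (φ : ℕ → ℕ) (w : H), StrictMono φ ∧
      ∀ v : H, Tendsto (fun j => ⟪x (φ j), v⟫) atTop (𝓝 ⟪w, v⟫) := by
  have hne : Nonempty H := ⟨0⟩
  have hC0 : 0 ≤ C := (norm_nonneg _).trans (hC 0)
  set b : ℕ → H := TopologicalSpace.denseSeq H with hb'
  have hb : DenseRange b := TopologicalSpace.denseRange_denseSeq H
  set g : ℕ → (ℕ → ℂ) := fun n i => ⟪x n, b i⟫ with hg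
  set K : Set (ℕ → ℂ) := Set.univ.pi (fun i => Metric.closedBall 0 (C * ‖b i‖)) with hK
  have hKc : IsCompact K := isCompact_univ_pi fun i => isCompact_closedBall _ _
  have hgK : ∀ n, g n ∈ K := by
    intro n
    rw [hK, Set.mem_univ_pi]
    intro i
    rw [Metric.mem_closedBall, dist_zero_right]
    exact (norm_inner_le_norm _ _).trans
      (mul_le_mul_of_nonneg_right (hC n) (norm_nonneg _))
  obtain ⟨L, -, φ, hφ, hLim⟩ := hKc.tendsto_subseq hgK
  have hcoord : ∀ i, Tendsto (fun j => ⟪x (φ j), b i⟫) atTop (𝓝 (L i)) := by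
    intro i
    exact (tendsto_pi_nhds.1 hLim) i
  have key : ∀ v : H, ∃ l : ℂ, Tendsto (fun j => ⟪x (φ j), v⟫) atTop (𝓝 l) := by
    intro v
    have hcau : CauchySeq (fun j => ⟪x (φ j), v⟫) := by
      rw [Metric.cauchySeq_iff]
      intro ε hε
      have hpos : 0 < ε / (3 * (C + 1)) := by positivity
      obtain ⟨i, hi⟩ := Metric.denseRange_iff.1 hb v (ε / (3 * (C + 1))) hpos
      have hconv : CauchySeq (fun j => ⟪x (φ j), b i⟫) := (hcoord i).cauchySeq
      obtain ⟨N, hN⟩ := Metric.cauchySeq_iff.1 hconv (ε / 3) (by positivity)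
      refine ⟨N, fun m hm n hn => ?_⟩
      have hdist : ∀ j, dist (⟪x (φ j), v⟫) (⟪x (φ j), b i⟫) ≤ C * dist (b i) v := by
        intro j
        rw [dist_eq_norm, ← inner_sub_right]
        refine (norm_inner_le_norm _ _).trans ?_
        rw [show ‖v - b i‖ = dist (b i) v by rw [dist_comm, dist_eq_norm]]
        exact mul_le_mul_of_nonneg_right (hC _) dist_nonneg
      have hsmall : C * dist (b i) v < ε / 3 := by
        have h1 : C * dist (b i) v ≤ C * (ε / (3 * (C + 1))) := by
          rw [dist_comm]
          exact mul_le_mul_of_nonneg_left hi.le hC0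
        have h2 : C * (ε / (3 * (C + 1))) < ε / 3 := by
          rw [mul_div_assoc', div_lt_div_iff₀ (by positivity) (by positivity)]
          nlinarith
        linarith
      calc dist (⟪x (φ m), v⟫) (⟪x (φ n), v⟫)
          ≤ dist (⟪x (φ m), v⟫) (⟪x (φ m), b i⟫) + dist (⟪x (φ m), b i⟫) (⟪x (φ n), b i⟫)
            + dist (⟪x (φ n), b i⟫) (⟪x (φ n), v⟫) := dist_triangle4 _ _ _ _
        _ < ε / 3 + ε / 3 + ε / 3 := by
            have := hN m hm n hn
            have h1 := (hdist m).trans_lt hsmall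
            have h2 := (dist_comm (⟪x (φ n), b i⟫) (⟪x (φ n), v⟫) ▸ (hdist n)).trans_lt hsmall
            linarith
        _ = ε := by ring
    exact cauchySeq_tendsto_of_complete hcau
  choose l hl using key
  have hadd : ∀ u v, l (u + v) = l u + l v := by
    intro u v
    refine tendsto_nhds_unique (hl (u + v)) ?_
    have := (hl u).add (hl v)
    simpa [inner_add_right] using this
  have hsmul : ∀ (c : ℂ) v, l (c • v) = c • l v := by
    intro c v
    refine tendsto_nhds_unique (hl (c • v)) ?_
    have := (hl v).const_mul c
    simpa [inner_smul_right, smul_eq_mul] using this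
  have hbound : ∀ v, ‖l v‖ ≤ C * ‖v‖ := by
    intro v
    refine le_of_tendsto (hl v).norm (Eventually.of_forall fun j => ?_)
    exact (norm_inner_le_norm _ _).trans (mul_le_mul_of_nonneg_right (hC _) (norm_nonneg _))
  let F : H →L[ℂ] ℂ := LinearMap.mkContinuous
    { toFun := l, map_add' := hadd, map_smul' := hsmul } C hbound
  refine ⟨φ, (InnerProductSpace.toDual ℂ H).symm F, hφ, fun v => ?_⟩
  rw [InnerProductSpace.toDual_symm_apply]
  exact hl v

/-- Lemma "lem2-inf-case": a linearly independent sequence admits a subsequence and a vector `a`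
with non-zero inner products tending to `0` or to `∞`. -/
theorem stmt_8 {H : Type*} [NormedAddCommGroup H] [InnerProductSpace ℂ H] [CompleteSpace H]
    [TopologicalSpace.SeparableSpace H]
    (x : ℕ → H) (hx : LinearIndependent ℂ x) :
    ∃ (φ : ℕ → ℕ) (a : H), StrictMono φ ∧
      (∀ k, ∀ c : ℂ, x (φ k) ≠ c • a) ∧
      (∀ k, (inner ℂ (x (φ k)) a : ℂ) ≠ 0) ∧
      (Filter.Tendsto (fun k => (inner ℂ (x (φ k)) a : ℂ)) Filter.atTop (nhds 0) ∨
        Filter.Tendsto (fun k => ‖(inner ℂ (x (φ k)) a : ℂ)‖) Filter.atTop Filter.atTop) := by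
  classical
  have hne : Nonempty H := ⟨0⟩
  have hFD : ¬ FiniteDimensional ℂ H := fun h =>
    Module.Finite.not_linearIndependent_of_infinite x hx
  set B : ℕ → Set H := fun N => {w | ∀ n, ‖⟪x n, w⟫‖ ≤ N} with hB
  have hBclosed : ∀ N, IsClosed (B N) := by
    intro N
    have : B N = ⋂ n, {w : H | ‖⟪x n, w⟫‖ ≤ N} := by
      ext w; simp [hB, Set.mem_iInter]
    rw [this]
    exact isClosed_iInter fun n =>
      isClosed_le ((continuous_const.inner continuous_id).norm) continuous_const
  have hker_proper : ∀ n : ℕ, (LinearMap.ker (innerSL ℂ (x n) : H →ₗ[ℂ] ℂ) : Submodule ℂ H) ≠ ⊤ := by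
    intro n h
    have hmem : x n ∈ LinearMap.ker (innerSL ℂ (x n) : H →ₗ[ℂ] ℂ) := h ▸ Submodule.mem_top
    rw [LinearMap.mem_ker] at hmem
    have : ⟪x n, x n⟫ = 0 := hmem
    exact hx.ne_zero n (inner_self_eq_zero.1 this)
  have hline_proper : ∀ n : ℕ, (Submodule.span ℂ {x n} : Submodule ℂ H) ≠ ⊤ := by
    intro n h
    have hfd : FiniteDimensional ℂ (Submodule.span ℂ {x n} : Submodule ℂ H) := inferInstance
    rw [h] at hfd
    exact hFD (Submodule.topEquiv.finiteDimensional)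
  by_cases hcase : ∀ N : ℕ, interior (B N) = ∅
  · -- unbounded case: Baire gives a with unbounded inner products
    obtain ⟨a, ha⟩ := baire_avoid
      (ι := ℕ ⊕ ℕ ⊕ ℕ)
      (Sum.elim B (Sum.elim (fun n => ((LinearMap.ker (innerSL ℂ (x n) : H →ₗ[ℂ] ℂ) : Submodule ℂ H) : Set H))
        (fun n => ((Submodule.span ℂ {x n} : Submodule ℂ H) : Set H))))
      (by
        rintro (N | n | n)
        · exact hBclosed N
        · exact ContinuousLinearMap.isClosed_ker (innerSL ℂ (x n))
        · exact (Submodule.span ℂ {x n}).closed_of_finiteDimensional)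
      (by
        rintro (N | n | n)
        · exact hcase N
        · exact submodule_interior_empty _ (hker_proper n)
        · exact submodule_interior_empty _ (hline_proper n))
    have hnz : ∀ n, ⟪x n, a⟫ ≠ 0 := by
      intro n hzero
      refine ha (Sum.inr (Sum.inl n)) ?_
      simp only [Sum.elim_inr, Sum.elim_inl, SetLike.mem_coe, LinearMap.mem_ker]
      simpa using hzero
    have hnotline : ∀ n, a ∉ Submodule.span ℂ {x n} := fun n h => ha (Sum.inr (Sum.inr n)) h
    have hub : ∀ R : ℝ, ∃ n, R < ‖⟪x n, a⟫‖ := by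
      intro R
      obtain ⟨N, hN⟩ := exists_nat_ge R
      have hBa : a ∉ B N := ha (Sum.inl N)
      by_contra hc
      push_neg at hc
      exact hBa (fun n => le_trans (hc n) hN)
    have hfreq : ∀ k : ℕ, ∃ᶠ n in atTop, (k : ℝ) ≤ ‖⟪x n, a⟫‖ := by
      intro k
      rw [Filter.frequently_atTop]
      intro m
      set S : ℝ := (Finset.range (m + 1)).sup' ⟨0, Finset.mem_range.2 (Nat.succ_pos m)⟩
        (fun n => ‖⟪x n, a⟫‖) with hS
      obtain ⟨n, hn⟩ := hub (max (k : ℝ) S)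
      refine ⟨n, ?_, le_of_lt (lt_of_le_of_lt (le_max_left _ _) hn)⟩
      by_contra hnm
      push_neg at hnm
      have hle : ‖⟪x n, a⟫‖ ≤ S := by
        rw [hS]
        exact Finset.le_sup' (fun n => ‖⟪x n, a⟫‖) (Finset.mem_range.2 (Nat.lt_succ_of_lt hnm))
      exact absurd hn (not_lt.2 (hle.trans (le_max_right _ _)))
    obtain ⟨φ, hφ, hφval⟩ := Filter.extraction_forall_of_frequently hfreq
    refine ⟨φ, a, hφ, ?_, fun k => hnz (φ k), Or.inr ?_⟩
    · intro k c hc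
      rcases eq_or_ne c 0 with rfl | hc0
      · exact hx.ne_zero (φ k) (by simpa using hc)
      · refine hnotline (φ k) ?_
        rw [Submodule.mem_span_singleton]
        exact ⟨c⁻¹, by rw [hc, smul_smul, inv_mul_cancel₀ hc0, one_smul]⟩
    · exact tendsto_atTop_mono hφval tendsto_natCast_atTop_atTop
  · -- bounded case
    push_neg at hcase
    obtain ⟨N, hNne⟩ := hcase
    obtain ⟨w₀, hw₀⟩ := hNne
    obtain ⟨r, hr, hball⟩ := Metric.isOpen_iff.1 isOpen_interior w₀ hw₀
    have hballB : Metric.ball w₀ r ⊆ B N := hball.trans interior_subset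
    have hw₀B : w₀ ∈ B N := hballB (Metric.mem_ball_self hr)
    set C : ℝ := 4 * (N + 1) / r with hCdef
    have hbound : ∀ n, ‖x n‖ ≤ C := by
      intro n
      rcases eq_or_ne (x n) 0 with h0 | h0
      · rw [h0, norm_zero]; positivity
      · have hxn : 0 < ‖x n‖ := norm_pos_iff.2 h0
        set u : H := ((((r / 2) * ‖x n‖⁻¹ : ℝ) : ℂ)) • x n with hu
        have hnu : ‖u‖ = r / 2 := by
          rw [hu, norm_smul, Complex.norm_real, Real.norm_eq_abs,
            abs_of_nonneg (by positivity), mul_assoc, inv_mul_cancel₀ hxn.ne', mul_one]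
        have hmem : w₀ + u ∈ B N := by
          refine hballB ?_
          rw [Metric.mem_ball, dist_eq_norm, add_sub_cancel_left, hnu]
          linarith
        have h1 : ‖⟪x n, w₀ + u⟫‖ ≤ N := hmem n
        have h2 : ‖⟪x n, w₀⟫‖ ≤ N := hw₀B n
        have h3 : ‖⟪x n, u⟫‖ ≤ 2 * N := by
          have heq : ⟪x n, u⟫ = ⟪x n, w₀ + u⟫ - ⟪x n, w₀⟫ := by
            rw [inner_add_right]; ring
          rw [heq]
          calc ‖⟪x n, w₀ + u⟫ - ⟪x n, w₀⟫‖ ≤ ‖⟪x n, w₀ + u⟫‖ + ‖⟪x n, w₀⟫‖ := norm_sub_le _ _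
            _ ≤ 2 * N := by linarith
        have h4 : ‖⟪x n, u⟫‖ = (r / 2) * ‖x n‖ := by
          rw [hu, inner_smul_right, norm_mul, Complex.norm_real, Real.norm_eq_abs,
            abs_of_nonneg (by positivity)]
          rw [show (⟪x n, x n⟫ : ℂ) = ((‖x n‖ : ℂ))^2 from inner_self_eq_norm_sq_to_K (x n)]
          rw [norm_pow, Complex.norm_real, Real.norm_eq_abs, abs_of_nonneg hxn.le]
          field_simp
        rw [h4] at h3
        rw [hCdef, le_div_iff₀ hr]
        nlinarith
    obtain ⟨φ₀, w, hφ₀, hweak⟩ := exists_weak_subseq x C hbound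
    -- at most one index lands in the line through w
    have huniq : ∀ m n : ℕ, x m ∈ (ℂ ∙ w) → x n ∈ (ℂ ∙ w) → m = n := by
      intro m n hm hn
      by_contra hmn
      rcases Submodule.mem_span_singleton.1 hm with ⟨cm, hcm⟩
      rcases Submodule.mem_span_singleton.1 hn with ⟨cn, hcn⟩
      have hcn0 : cn ≠ 0 := by
        rintro rfl
        exact hx.ne_zero n (by rw [← hcn, zero_smul])
      have : x m ∈ Submodule.span ℂ (x '' {n}) := by
        rw [Set.image_singleton, Submodule.mem_span_singleton]
        exact ⟨cm * cn⁻¹, by rw [← hcm, ← hcn, smul_smul, mul_assoc,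
          inv_mul_cancel₀ hcn0, mul_one]⟩
      exact hx.notMem_span_image (by simpa using hmn) this
    set K : ℕ := if h : ∃ k, x (φ₀ k) ∈ (ℂ ∙ w) then h.choose + 1 else 0 with hKdef
    have hK : ∀ j, x (φ₀ (j + K)) ∉ (ℂ ∙ w) := by
      intro j hmem
      by_cases h : ∃ k, x (φ₀ k) ∈ (ℂ ∙ w)
      · have hj : φ₀ (j + K) = φ₀ h.choose := huniq _ _ hmem h.choose_spec
        have : j + K = h.choose := hφ₀.injective hj
        rw [hKdef] at this
        simp only [h, dif_pos] at this
        omega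
      · exact h ⟨j + K, hmem⟩
    set ψ : ℕ → ℕ := fun j => φ₀ (j + K) with hψ
    have hψmono : StrictMono ψ := fun a b h => hφ₀ (by omega)
    have hψweak : ∀ v : H, Tendsto (fun j => ⟪x (ψ j), v⟫) atTop (𝓝 ⟪w, v⟫) := by
      intro v
      exact (hweak v).comp (tendsto_add_atTop_nat K)
    -- Baire selection inside W := (ℂ ∙ w)ᗮ
    set W : Submodule ℂ H := (ℂ ∙ w)ᗮ with hW
    haveI : CompleteSpace W := (Submodule.isClosed_orthogonal (ℂ ∙ w)).completeSpace_coe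
    haveI : Nonempty W := ⟨0⟩
    have hWorth : Wᗮ = (ℂ ∙ w) := Submodule.orthogonal_orthogonal _
    -- the bad submodules of W
    set A : ℕ → Submodule ℂ W := fun k => LinearMap.ker (((innerSL ℂ (x (ψ k))).comp W.subtypeL : W →ₗ[ℂ] ℂ))
      with hA
    set Lm : ℕ → Submodule ℂ W := fun k => (Submodule.span ℂ {x (ψ k)}).comap W.subtype with hLm
    have hAproper : ∀ k, A k ≠ ⊤ := by
      intro k htop
      have hall : ∀ a : W, ⟪x (ψ k), (a : H)⟫ = 0 := by
        intro a
        have : a ∈ A k := htop ▸ Submodule.mem_top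
        simpa [hA, LinearMap.mem_ker] using this
      have : x (ψ k) ∈ Wᗮ := by
        rw [Submodule.mem_orthogonal]
        intro u hu
        rw [inner_eq_zero_symm]
        exact hall ⟨u, hu⟩
      rw [hWorth] at this
      exact hK k this
    have hLmproper : ∀ k, Lm k ≠ ⊤ := by
      intro k htop
      have hle : W ≤ Submodule.span ℂ {x (ψ k)} := by
        intro v hv
        have : (⟨v, hv⟩ : W) ∈ Lm k := htop ▸ Submodule.mem_top
        simpa [hLm, Submodule.mem_comap] using this
      have hWfd : FiniteDimensional ℂ W :=
        FiniteDimensional.of_injective (Submodule.inclusion hle) (Submodule.inclusion_injective hle)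
      have hsum : (ℂ ∙ w) ⊔ W = ⊤ := Submodule.sup_orthogonal_of_hasOrthogonalProjection
      have : FiniteDimensional ℂ ((ℂ ∙ w) ⊔ W : Submodule ℂ H) := inferInstance
      rw [hsum] at this
      exact hFD (Submodule.topEquiv.finiteDimensional)
    obtain ⟨a, ha⟩ := baire_avoid
      (ι := ℕ ⊕ ℕ)
      (Sum.elim (fun k => ((A k : Submodule ℂ W) : Set W))
        (fun k => ((Lm k : Submodule ℂ W) : Set W)))
      (by
        rintro (k | k)
        · exact ContinuousLinearMap.isClosed_ker ((innerSL ℂ (x (ψ k))).comp W.subtypeL)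
        · exact (Submodule.span ℂ {x (ψ k)}).closed_of_finiteDimensional.preimage
            continuous_subtype_val
      )
      (by
        rintro (k | k)
        · exact submodule_interior_empty _ (hAproper k)
        · exact submodule_interior_empty _ (hLmproper k))
    have hanz : ∀ k, ⟪x (ψ k), (a : H)⟫ ≠ 0 := by
      intro k hzero
      refine ha (Sum.inl k) ?_
      simp only [hA, SetLike.mem_coe, LinearMap.mem_ker, ContinuousLinearMap.comp_apply]
      simpa using hzero
    have hanotline : ∀ k, (a : H) ∉ Submodule.span ℂ {x (ψ k)} := by
      intro k h
      exact ha (Sum.inr k) (by simpa [hLm, Submodule.mem_comap] using h)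
    refine ⟨ψ, (a : H), hψmono, ?_, hanz, Or.inl ?_⟩
    · intro k c hc
      rcases eq_or_ne c 0 with rfl | hc0
      · exact hx.ne_zero (ψ k) (by simpa using hc)
      · refine hanotline k ?_
        rw [Submodule.mem_span_singleton]
        exact ⟨c⁻¹, by rw [hc, smul_smul, inv_mul_cancel₀ hc0, one_smul]⟩
    · have hzero : ⟪w, (a : H)⟫ = 0 := by
        have h2 : (a : H) ∈ (Submodule.span ℂ {w})ᗮ := a.2
        rw [Submodule.mem_orthogonal] at h2
        exact h2 w (Submodule.mem_span_singleton_self w)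
      have := hψweak (a : H)
      rwa [hzero] at this
end

section
/- Let X be an infinite-dimensional separable complex Banach space and Γ ⊂ ℂ^l with Γ \ {0} non-empty. Then every hypercyclic operator T on X is Γ-supercyclic: there exists a linearly independent family x₁,…,x_l in X such that {T^n (Σᵢ γᵢ xᵢ) : n ∈ ℕ, (γ₁,…,γ_l) ∈ Γ} is dense in X. -/
/-- Auxiliary: in a space of infinite rank, for any nonzero vector `x` and any `k`, there is a
linearly independent family of size `k+1` whose first entry is `x`. -/
lemma aux_exists_li {X : Type*} [NormedAddCommGroup X] [NormedSpace ℂ X]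
    (hX : ¬ FiniteDimensional ℂ X) {x : X} (hx : x ≠ 0) (k : ℕ) :
    ∃ v : Fin (k + 1) → X, LinearIndependent ℂ v ∧ v 0 = x := by
  have hrank : ∀ n : ℕ, (n : Cardinal) < Module.rank ℂ X := by
    intro n
    have : ¬ Module.rank ℂ X < Cardinal.aleph0 := by
      rw [Module.rank_lt_aleph0_iff]
      exact hX
    exact lt_of_lt_of_le (Cardinal.nat_lt_aleph0 n) (not_lt.mp this)
  induction k with
  | zero =>
    exact ⟨![x], (linearIndependent_unique_iff (ι := Fin 1) (v := ![x])).mpr hx, rfl⟩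
  | succ k ih =>
    obtain ⟨v, hv, hv0⟩ := ih
    obtain ⟨y, hy⟩ := exists_linearIndependent_snoc_of_lt_rank hv (hrank (k + 1))
    refine ⟨Fin.snoc v y, hy, ?_⟩
    rw [show (0 : Fin (k + 2)) = Fin.castSucc 0 from rfl, Fin.snoc_castSucc]
    exact hv0

/-- Proposition "prop-hyp-Gammahyp": any hypercyclic operator on an infinite-dimensional
separable complex Banach space is `Γ`-supercyclic whenever `Γ \ {0} ≠ ∅`. -/
theorem stmt_12 {X : Type*} [NormedAddCommGroup X] [NormedSpace ℂ X] [CompleteSpace X]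
    [TopologicalSpace.SeparableSpace X] (hX : ¬ FiniteDimensional ℂ X)
    (l : ℕ) (Γ : Set (Fin l → ℂ)) (hΓ : ∃ γ ∈ Γ, γ ≠ 0)
    (T : X →L[ℂ] X) (hT : ∃ x : X, Dense (Set.range fun n : ℕ => (T ^ n) x)) :
    ∃ x : Fin l → X, LinearIndependent ℂ x ∧
      Dense {y : X | ∃ n : ℕ, ∃ γ ∈ Γ, y = (T ^ n) (∑ i, γ i • x i)} := by
  obtain ⟨γ, hγΓ, hγ⟩ := hΓ
  obtain ⟨j, hγj⟩ : ∃ j, γ j ≠ 0 := by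
    by_contra h
    push_neg at h
    exact hγ (funext h)
  obtain ⟨xs, hxs⟩ := hT
  -- the hypercyclic vector is nonzero
  have hxs0 : xs ≠ 0 := by
    intro h
    subst h
    have : Set.range (fun n : ℕ => (T ^ n) (0 : X)) = {0} := by
      ext y
      simp [map_zero]
    rw [this] at hxs
    have : (Set.univ : Set X) = closure ({0} : Set X) := (hxs.closure_eq).symm
    rw [isClosed_singleton.closure_eq] at this
    have hsub : Subsingleton X := by
      constructor
      intro a b
      have ha : a ∈ ({0} : Set X) := this ▸ Set.mem_univ a
      have hb : b ∈ ({0} : Set X) := this ▸ Set.mem_univ b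
      simp at ha hb; rw [ha, hb]
    exact hX (Module.finite_of_rank_eq_zero (by simp [rank_subsingleton']))
  -- case l = 0 is impossible since γ ≠ 0
  cases' l with m
  · exact absurd (Subsingleton.elim γ 0) hγ
  -- get a linearly independent family whose first entry is xs
  obtain ⟨v, hv, hv0⟩ := aux_exists_li hX hxs0 m
  -- permute so that position j holds xs
  set w : Fin (m + 1) → X := v ∘ (Equiv.swap j 0) with hw
  have hwli : LinearIndependent ℂ w := hv.comp _ (Equiv.swap j 0).injective
  have hwj : w j = xs := by simp [hw, Equiv.swap_apply_left, hv0]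
  -- define the family x
  set x : Fin (m + 1) → X := fun i =>
    if i = j then (γ j)⁻¹ • (xs - ∑ i ∈ Finset.univ.erase j, γ i • w i) else w i with hxdef
  have hsum : ∑ i, γ i • x i = xs := by
    rw [← Finset.add_sum_erase _ _ (Finset.mem_univ j)]
    have h1 : γ j • x j = xs - ∑ i ∈ Finset.univ.erase j, γ i • w i := by
      simp only [hxdef, eq_self_iff_true, if_true]
      rw [smul_smul, mul_inv_cancel₀ hγj, one_smul]
    have h2 : ∑ i ∈ Finset.univ.erase j, γ i • x i
        = ∑ i ∈ Finset.univ.erase j, γ i • w i := by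
      apply Finset.sum_congr rfl
      intro i hi
      rw [hxdef]
      simp only [if_neg (Finset.ne_of_mem_erase hi)]
    rw [h1, h2, sub_add_cancel]
  -- linear independence of x
  have hxli : LinearIndependent ℂ x := by
    rw [Fintype.linearIndependent_iff]
    intro c hc
    set d : Fin (m + 1) → ℂ := fun i =>
      if i = j then c j * (γ j)⁻¹ else c i - c j * (γ j)⁻¹ * γ i with hd
    have hdw : ∑ i, d i • w i = ∑ i, c i • x i := by
      rw [← Finset.add_sum_erase _ (fun i => d i • w i) (Finset.mem_univ j),
          ← Finset.add_sum_erase _ (fun i => c i • x i) (Finset.mem_univ j)]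
      have e1 : d j • w j = c j • ((γ j)⁻¹ • xs) := by
        simp only [hd, eq_self_iff_true, if_true]
        rw [hwj, mul_smul, smul_smul]
      have e2 : ∀ i ∈ Finset.univ.erase j,
          d i • w i = c i • w i - c j • ((γ j)⁻¹ • (γ i • w i)) := by
        intro i hi
        rw [hd]
        simp only [if_neg (Finset.ne_of_mem_erase hi)]
        rw [sub_smul, smul_smul, smul_smul, mul_assoc]
      rw [Finset.sum_congr rfl e2, Finset.sum_sub_distrib, ← Finset.smul_sum, ← Finset.smul_sum]
      have e3 : c j • x j = c j • ((γ j)⁻¹ • xs)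
          - c j • ((γ j)⁻¹ • ∑ i ∈ Finset.univ.erase j, γ i • w i) := by
        simp only [hxdef, eq_self_iff_true, if_true]
        rw [smul_sub, smul_sub]
      have e4 : ∀ i ∈ Finset.univ.erase j, c i • x i = c i • w i := by
        intro i hi
        rw [hxdef]; simp only [if_neg (Finset.ne_of_mem_erase hi)]
      rw [Finset.sum_congr rfl e4, e1, e3]
      abel
    rw [hc] at hdw
    have hdzero := Fintype.linearIndependent_iff.mp hwli d hdw
    have hcj : c j = 0 := by
      have := hdzero j
      simp only [hd, eq_self_iff_true, if_true] at this
      rcases mul_eq_zero.mp this with h | h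
      · exact h
      · exact absurd (inv_eq_zero.mp h) hγj
    intro i
    by_cases hij : i = j
    · rw [hij]; exact hcj
    · have := hdzero i
      rw [hd] at this
      simp only [if_neg hij] at this
      rw [hcj] at this
      simpa using this
  refine ⟨x, hxli, ?_⟩
  apply Dense.mono _ (hsum ▸ hxs)
  rintro y ⟨n, rfl⟩
  exact ⟨n, γ, hγΓ, rfl⟩
end

section
/- Let H = ℂ ⊕ ℓ²(ℤ) and T = e^{iθ} ⊕ B_w, where θ/π is irrational, the rotation acts on ℂ by multiplication by e^{iθ}, and B_w is the bilateral weighted backward shift with weight w_i = 2 for i > 0 and w_i = 1/2 for i ≤ 0. Suppose the product map e^{iθ} × B_w on 𝕋 × ℓ²(ℤ) is universal with universal vector (1, x), and let Γ₁ ⊂ ℂ be bounded, bounded away from 0, and such that Γ₁𝕋 is somewhere dense in ℂ. Then for any λ > 0 the orbit of Γ₁ · (λ, x) under T is somewhere dense in H, although T is not hypercyclic. -/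
open Filter

/-- The construction in the "only if" part of Theorem "thm-BF-scalar": on `H = ℂ ⊕ ℓ²(ℤ)`,
`T = e^{iθ} ⊕ B_w` is not hypercyclic, but the orbit of `Γ₁ · (λ, x)` is somewhere dense. -/
theorem stmt_16
    (θ : ℝ) (hθ : Irrational (θ / Real.pi))
    (B : lp (fun _ : ℤ => ℂ) 2 →L[ℂ] lp (fun _ : ℤ => ℂ) 2)
    (hB : ∀ j : ℤ, B (lp.single 2 j (1 : ℂ)) =
      (if 0 < j then (2 : ℂ) else 1/2) • lp.single 2 (j - 1) (1 : ℂ))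
    (T : ℂ × lp (fun _ : ℤ => ℂ) 2 →L[ℂ] ℂ × lp (fun _ : ℤ => ℂ) 2)
    (hT : T = (Complex.exp (θ * Complex.I) • ContinuousLinearMap.id ℂ ℂ).prodMap B)
    (x : lp (fun _ : ℤ => ℂ) 2)
    (huniv : ∀ μ : ℂ, ‖μ‖ = 1 → ∀ z : lp (fun _ : ℤ => ℂ) 2,
      (μ, z) ∈ closure {p : ℂ × lp (fun _ : ℤ => ℂ) 2 |
        ∃ n : ℕ, p = (Complex.exp (θ * Complex.I) ^ n, (B ^ n) x)})
    (Γ₁ : Set ℂ) (ha : ∃ a b : ℝ, 0 < a ∧ ∀ γ ∈ Γ₁, a ≤ ‖γ‖ ∧ ‖γ‖ ≤ b)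
    (hsd : (interior (closure
      {z : ℂ | ∃ γ ∈ Γ₁, ∃ lam : ℂ, ‖lam‖ = 1 ∧ z = γ * lam})).Nonempty) :
    ∀ lam : ℝ, 0 < lam →
      (interior (closure {p : ℂ × lp (fun _ : ℤ => ℂ) 2 |
          ∃ γ ∈ Γ₁, ∃ n : ℕ, p = (T ^ n) (γ • ((lam : ℂ), x))})).Nonempty ∧
      ¬ ∃ q : ℂ × lp (fun _ : ℤ => ℂ) 2,
          Dense (Set.range fun n : ℕ => (T ^ n) q) := by
  intro lam hlam
  set c : ℂ := Complex.exp (θ * Complex.I) with hc_def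
  have hc : ‖c‖ = 1 := by
    simp [hc_def, Complex.norm_exp]
  -- key formula for powers of T
  have key : ∀ (n : ℕ) (a : ℂ) (y : lp (fun _ : ℤ => ℂ) 2),
      (T ^ n) (a, y) = (c ^ n * a, (B ^ n) y) := by
    intro n
    induction n with
    | zero => intro a y; simp
    | succ n ih =>
        intro a y
        have h1 : (T ^ (n + 1)) (a, y) = T ((T ^ n) (a, y)) := by
          rw [pow_succ']; rfl
        have h2 : (B ^ (n + 1)) y = B ((B ^ n) y) := by
          rw [pow_succ']; rfl
        rw [h1, ih, hT, h2]
        refine Prod.ext ?_ rfl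
        show c • (c ^ n * a) = c ^ (n + 1) * a
        rw [smul_eq_mul, pow_succ]
        ring
  constructor
  · -- somewhere dense orbit
    set W : Set ℂ :=
      {z : ℂ | ∃ γ ∈ Γ₁, ∃ l : ℂ, ‖l‖ = 1 ∧ z = γ * l} with hW_def
    set Orb : Set (ℂ × lp (fun _ : ℤ => ℂ) 2) :=
      {p | ∃ γ ∈ Γ₁, ∃ n : ℕ, p = (T ^ n) (γ • ((lam : ℂ), x))} with hOrb_def
    obtain ⟨a, b, hapos, hab⟩ := ha
    -- claim A
    have claimA : ∀ w ∈ W, ∀ z : lp (fun _ : ℤ => ℂ) 2,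
        ((lam : ℂ) * w, z) ∈ closure Orb := by
      rintro w ⟨γ, hγ, μ, hμ, rfl⟩ z
      have hγ0 : γ ≠ 0 := by
        intro h
        have := (hab γ hγ).1
        rw [h, norm_zero] at this
        linarith
      have hmem := huniv μ hμ (γ⁻¹ • z)
      have hcont : Continuous (fun p : ℂ × lp (fun _ : ℤ => ℂ) 2 =>
          (((lam : ℂ) * γ) * p.1, γ • p.2)) := by fun_prop
      have hmaps : Set.MapsTo (fun p : ℂ × lp (fun _ : ℤ => ℂ) 2 =>
          (((lam : ℂ) * γ) * p.1, γ • p.2))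
          {p : ℂ × lp (fun _ : ℤ => ℂ) 2 |
            ∃ n : ℕ, p = (c ^ n, (B ^ n) x)} Orb := by
        rintro p ⟨n, rfl⟩
        refine ⟨γ, hγ, n, ?_⟩
        have hsmul : γ • ((lam : ℂ), x) = (γ * (lam : ℂ), γ • x) := rfl
        rw [hsmul, key n]
        have : (B ^ n) (γ • x) = γ • (B ^ n) x := by
          exact map_smul (B ^ n) γ x
        rw [this]
        simp only [Prod.mk.injEq]
        exact ⟨by ring, trivial⟩
      have hmem2 := map_mem_closure hcont hmem hmaps
      dsimp only at hmem2
      rw [smul_inv_smul₀ hγ0] at hmem2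
      rw [show (lam : ℂ) * (γ * μ) = (lam : ℂ) * γ * μ from (mul_assoc _ _ _).symm]
      exact hmem2
    -- claim B : extend to closure of W
    have claimB : ∀ w ∈ closure W, ∀ z : lp (fun _ : ℤ => ℂ) 2,
        ((lam : ℂ) * w, z) ∈ closure Orb := by
      intro w hw z
      have hcont : Continuous (fun u : ℂ => ((lam : ℂ) * u, z)) := by fun_prop
      have hmaps : Set.MapsTo (fun u : ℂ => ((lam : ℂ) * u, z)) W (closure Orb) :=
        fun u hu => claimA u hu z
      have := map_mem_closure hcont hw hmaps
      rwa [closure_closure] at this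
    obtain ⟨w₀, hw₀⟩ := hsd
    have hw₀' : w₀ ∈ interior (closure W) := hw₀
    have hl0 : (lam : ℂ) ≠ 0 := by
      exact_mod_cast (ne_of_gt hlam)
    have hopenmap : IsOpenMap (fun u : ℂ => (lam : ℂ) * u) :=
      (Homeomorph.mulLeft₀ (lam : ℂ) hl0).isOpenMap
    have hopen : IsOpen (((fun u : ℂ => (lam : ℂ) * u) ''
        interior (closure W)) ×ˢ (Set.univ : Set (lp (fun _ : ℤ => ℂ) 2))) :=
      IsOpen.prod (hopenmap _ isOpen_interior) isOpen_univ
    have hsub : (((fun u : ℂ => (lam : ℂ) * u) ''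
        interior (closure W)) ×ˢ (Set.univ : Set (lp (fun _ : ℤ => ℂ) 2)))
        ⊆ closure Orb := by
      rintro ⟨p₁, p₂⟩ ⟨⟨w, hw, rfl⟩, -⟩
      exact claimB w (interior_subset hw) p₂
    exact ⟨((lam : ℂ) * w₀, 0),
      interior_maximal hsub hopen ⟨⟨w₀, hw₀', rfl⟩, Set.mem_univ _⟩⟩
  · -- not hypercyclic
    rintro ⟨q, hq⟩
    set P : ℂ × lp (fun _ : ℤ => ℂ) 2 := (((‖q.1‖ + 1 : ℝ) : ℂ), 0) with hP_def
    obtain ⟨p, hp_ball, hp_mem⟩ :=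
      (Metric.dense_iff.mp hq P (1/2) (by norm_num))
    obtain ⟨n, rfl⟩ := hp_mem
    have h1 : dist ((T ^ n) q).1 P.1 ≤ dist ((T ^ n) q) P := by
      rw [Prod.dist_eq]; exact le_max_left _ _
    have h2 : dist ((T ^ n) q) P < 1/2 := Metric.mem_ball.mp hp_ball
    have h3 : ((T ^ n) q).1 = c ^ n * q.1 := by
      rw [key n q.1 q.2]
    have h4 : ‖((T ^ n) q).1‖ = ‖q.1‖ := by
      rw [h3, norm_mul, norm_pow, hc, one_pow, one_mul]
    have h5 : ‖P.1‖ = ‖q.1‖ + 1 := by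
      show ‖((‖q.1‖ + 1 : ℝ) : ℂ)‖ = ‖q.1‖ + 1
      rw [Complex.norm_real, Real.norm_eq_abs, abs_of_nonneg (by positivity)]
    have h6 : ‖P.1‖ - ‖((T ^ n) q).1‖ ≤ ‖P.1 - ((T ^ n) q).1‖ :=
      norm_sub_norm_le _ _
    rw [h4, h5] at h6
    have h7 : dist ((T ^ n) q).1 P.1 = ‖P.1 - ((T ^ n) q).1‖ := by
      rw [dist_comm, dist_eq_norm]
    linarith [h1.trans_lt h2, h7 ▸ (h1.trans_lt h2)]
end

section
/- A bounded separated sequence in an infinite-dimensional separable Hilbert space cannot be almost overcomplete; that is, if (x_n) is bounded and there is δ > 0 with ‖x_n − x_m‖ ≥ δ for all n ≠ m, then (x_n) has a subsequence whose closed linear span has infinite codimension. -/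
open Finset in
private lemma aux_riesz {H : Type*} [NormedAddCommGroup H] [InnerProductSpace ℂ H]
    (δ : ℝ) (hδ : 0 < δ) (w : ℕ → H) (hw : ∀ i, δ/2 ≤ ‖w i‖)
    (hop : ∀ i j, i ≠ j → ‖(inner ℂ (w i) (w j) : ℂ)‖ ≤ δ^2/16 * ((1/2:ℝ)^i * (1/2:ℝ)^j))
    (s : Finset ℕ) (c : ℕ → ℂ) :
    δ^2/6 * ∑ i ∈ s, ‖c i‖^2 ≤ ‖∑ i ∈ s, c i • w i‖^2 := by
  classical
  set v := ∑ i ∈ s, c i • w i with hv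
  have h1 : (‖v‖^2 : ℝ) = RCLike.re (inner ℂ v v : ℂ) := (inner_self_eq_norm_sq v).symm
  have expand : (inner ℂ v v : ℂ)
      = ∑ i ∈ s, ∑ j ∈ s, (starRingEnd ℂ) (c i) * (c j * inner ℂ (w i) (w j)) := by
    rw [hv, sum_inner]
    refine Finset.sum_congr rfl fun i _ => ?_
    rw [inner_sum]
    refine Finset.sum_congr rfl fun j _ => ?_
    rw [inner_smul_left, inner_smul_right]
  have hre : (‖v‖^2 : ℝ)
      = ∑ i ∈ s, ∑ j ∈ s, RCLike.re ((starRingEnd ℂ) (c i) * (c j * inner ℂ (w i) (w j))) := by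
    rw [h1, expand, map_sum]
    exact Finset.sum_congr rfl fun i _ => map_sum _ _ _
  -- diagonal term
  have hdiag : ∀ i, RCLike.re ((starRingEnd ℂ) (c i) * (c i * inner ℂ (w i) (w i)))
      = ‖c i‖^2 * ‖w i‖^2 := by
    intro i
    rw [inner_self_eq_norm_sq_to_K, ← mul_assoc, RCLike.conj_mul]
    norm_cast
  -- off-diagonal bound
  have hoff : ∀ i j, i ≠ j →
      -(δ^2/16 * ((1/2:ℝ)^i * ‖c i‖ * ((1/2:ℝ)^j * ‖c j‖)))
        ≤ RCLike.re ((starRingEnd ℂ) (c i) * (c j * inner ℂ (w i) (w j))) := by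
    intro i j hij
    have h2 : |RCLike.re ((starRingEnd ℂ) (c i) * (c j * inner ℂ (w i) (w j)))|
        ≤ ‖(starRingEnd ℂ) (c i) * (c j * inner ℂ (w i) (w j))‖ := RCLike.abs_re_le_norm _
    have h3 : ‖(starRingEnd ℂ) (c i) * (c j * inner ℂ (w i) (w j))‖
        = ‖c i‖ * (‖c j‖ * ‖(inner ℂ (w i) (w j) : ℂ)‖) := by
      rw [norm_mul, norm_mul, RCLike.norm_conj]
    have h4 := hop i j hij
    have hci : (0:ℝ) ≤ ‖c i‖ := norm_nonneg _
    have hcj : (0:ℝ) ≤ ‖c j‖ := norm_nonneg _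
    have h5 : ‖c i‖ * (‖c j‖ * ‖(inner ℂ (w i) (w j) : ℂ)‖)
        ≤ ‖c i‖ * (‖c j‖ * (δ^2/16 * ((1/2:ℝ)^i * (1/2:ℝ)^j))) :=
      mul_le_mul_of_nonneg_left (mul_le_mul_of_nonneg_left h4 hcj) hci
    have h6 : -(δ^2/16 * ((1/2:ℝ)^i * ‖c i‖ * ((1/2:ℝ)^j * ‖c j‖)))
        = -(‖c i‖ * (‖c j‖ * (δ^2/16 * ((1/2:ℝ)^i * (1/2:ℝ)^j)))) := by ring
    have h7 := neg_abs_le (RCLike.re ((starRingEnd ℂ) (c i) * (c j * inner ℂ (w i) (w j))))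
    linarith
  set a : ℕ → ℝ := fun i => (1/2:ℝ)^i * ‖c i‖ with ha
  have hanneg : ∀ i, 0 ≤ a i := fun i =>
    mul_nonneg (pow_nonneg (by norm_num) _) (norm_nonneg _)
  have hrow : ∀ i ∈ s,
      (δ/2)^2 * ‖c i‖^2 - δ^2/16 * (a i * ∑ j ∈ s, a j)
        ≤ ∑ j ∈ s, RCLike.re ((starRingEnd ℂ) (c i) * (c j * inner ℂ (w i) (w j))) := by
    intro i hi
    have hsum : ∑ j ∈ s, RCLike.re ((starRingEnd ℂ) (c i) * (c j * inner ℂ (w i) (w j)))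
        = (∑ j ∈ s.erase i, RCLike.re ((starRingEnd ℂ) (c i) * (c j * inner ℂ (w i) (w j))))
          + RCLike.re ((starRingEnd ℂ) (c i) * (c i * inner ℂ (w i) (w i))) :=
      (Finset.sum_erase_add s _ hi).symm
    rw [hsum]
    have hbd1 : (δ/2)^2 * ‖c i‖^2
        ≤ RCLike.re ((starRingEnd ℂ) (c i) * (c i * inner ℂ (w i) (w i))) := by
      rw [hdiag i]
      have h0 : (0:ℝ) ≤ ‖c i‖^2 := sq_nonneg _
      have hsq : (δ/2)^2 ≤ ‖w i‖^2 := by nlinarith [hw i, hδ]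
      nlinarith [mul_le_mul_of_nonneg_right hsq h0]
    have hbd2 : -(δ^2/16 * (a i * ∑ j ∈ s, a j))
        ≤ ∑ j ∈ s.erase i, RCLike.re ((starRingEnd ℂ) (c i) * (c j * inner ℂ (w i) (w j))) := by
      have step1 : ∑ j ∈ s.erase i, -(δ^2/16 * ((1/2:ℝ)^i * ‖c i‖ * ((1/2:ℝ)^j * ‖c j‖)))
          ≤ ∑ j ∈ s.erase i, RCLike.re ((starRingEnd ℂ) (c i) * (c j * inner ℂ (w i) (w j))) := by
        refine Finset.sum_le_sum fun j hj => hoff i j ?_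
        exact fun h => (Finset.mem_erase.mp hj).1 h.symm
      have step2 : ∑ j ∈ s.erase i, -(δ^2/16 * ((1/2:ℝ)^i * ‖c i‖ * ((1/2:ℝ)^j * ‖c j‖)))
          = -(δ^2/16 * (a i * ∑ j ∈ s.erase i, a j)) := by
        calc ∑ j ∈ s.erase i, -(δ^2/16 * ((1/2:ℝ)^i * ‖c i‖ * ((1/2:ℝ)^j * ‖c j‖)))
            = ∑ j ∈ s.erase i, (-(δ^2/16 * a i)) * a j :=
              Finset.sum_congr rfl fun j _ => by simp only [ha]; ring
          _ = (-(δ^2/16 * a i)) * ∑ j ∈ s.erase i, a j := (Finset.mul_sum _ _ _).symm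
          _ = -(δ^2/16 * (a i * ∑ j ∈ s.erase i, a j)) := by ring
      have step3 : ∑ j ∈ s.erase i, a j ≤ ∑ j ∈ s, a j :=
        Finset.sum_le_sum_of_subset_of_nonneg (Finset.erase_subset _ _)
          (fun j hj _ => hanneg j)
      have hδ2 : (0:ℝ) ≤ δ^2/16 * a i := by positivity
      nlinarith [hanneg i]
    linarith
  have htotal : (δ/2)^2 * (∑ i ∈ s, ‖c i‖^2) - δ^2/16 * (∑ i ∈ s, a i)^2 ≤ ‖v‖^2 := by
    rw [hre]
    have := Finset.sum_le_sum hrow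
    have heq : ∑ i ∈ s, ((δ/2)^2 * ‖c i‖^2 - δ^2/16 * (a i * ∑ j ∈ s, a j))
        = (δ/2)^2 * (∑ i ∈ s, ‖c i‖^2) - δ^2/16 * (∑ i ∈ s, a i)^2 := by
      rw [Finset.sum_sub_distrib, ← Finset.mul_sum, ← Finset.mul_sum, ← Finset.sum_mul]
      ring
    linarith
  have hCS : (∑ i ∈ s, a i)^2 ≤ (4/3) * ∑ i ∈ s, ‖c i‖^2 := by
    have h1 := Finset.sum_mul_sq_le_sq_mul_sq s (fun i => (1/2:ℝ)^i) (fun i => ‖c i‖)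
    have h2 : ∑ i ∈ s, ((1/2:ℝ)^i)^2 ≤ (4/3 : ℝ) := by
      have he : ∀ i, ((1/2:ℝ)^i)^2 = (1/4:ℝ)^i := fun i => by
        rw [← pow_mul, mul_comm, pow_mul]; norm_num
      calc ∑ i ∈ s, ((1/2:ℝ)^i)^2 = ∑ i ∈ s, (1/4:ℝ)^i :=
            Finset.sum_congr rfl fun i _ => he i
        _ ≤ ∑' i, (1/4:ℝ)^i := Summable.sum_le_tsum s (fun i _ => pow_nonneg (by norm_num) _)
            (summable_geometric_of_lt_one (by norm_num) (by norm_num))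
        _ = (4/3 : ℝ) := by rw [tsum_geometric_of_lt_one (by norm_num) (by norm_num)]; norm_num
    have hS : (0:ℝ) ≤ ∑ i ∈ s, ‖c i‖^2 :=
      Finset.sum_nonneg fun i _ => sq_nonneg _
    calc (∑ i ∈ s, a i)^2 ≤ (∑ i ∈ s, ((1/2:ℝ)^i)^2) * ∑ i ∈ s, ‖c i‖^2 := h1
      _ ≤ (4/3) * ∑ i ∈ s, ‖c i‖^2 := mul_le_mul_of_nonneg_right h2 hS
  have hS : (0:ℝ) ≤ ∑ i ∈ s, ‖c i‖^2 := Finset.sum_nonneg fun i _ => sq_nonneg _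
  nlinarith [sq_nonneg δ]


private lemma aux_notmem {H : Type*} [NormedAddCommGroup H] [InnerProductSpace ℂ H]
    (δ : ℝ) (hδ : 0 < δ) (w : ℕ → H)
    (hR : ∀ (s : Finset ℕ) (c : ℕ → ℂ),
      δ^2/6 * ∑ i ∈ s, ‖c i‖^2 ≤ ‖∑ i ∈ s, c i • w i‖^2)
    (n : ℕ) (A : Set ℕ) (hn : n ∉ A) :
    w n ∉ (Submodule.span ℂ (w '' A)).topologicalClosure := by
  classical
  intro hmem
  rw [← SetLike.mem_coe, Submodule.topologicalClosure_coe] at hmem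
  have hδ6 : (0:ℝ) < δ/3 := by linarith
  obtain ⟨b, hb, hdist⟩ := Metric.mem_closure_iff.mp hmem (δ/3) hδ6
  rw [SetLike.mem_coe, Finsupp.mem_span_image_iff_linearCombination] at hb
  obtain ⟨l, hlsupp, hlb⟩ := hb
  have hnsupp : n ∉ l.support := fun h => hn (hlsupp h)
  set c : ℕ → ℂ := fun i => if i = n then 1 else -l i with hc
  have hrepr : ∑ i ∈ insert n l.support, c i • w i = w n - b := by
    rw [Finset.sum_insert hnsupp]
    have h1 : c n = 1 := by simp [hc]
    have h2 : ∑ i ∈ l.support, c i • w i = -b := by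
      rw [← hlb, Finsupp.linearCombination_apply, Finsupp.sum, ← Finset.sum_neg_distrib]
      refine Finset.sum_congr rfl fun i hi => ?_
      have : i ≠ n := fun h => hnsupp (h ▸ hi)
      simp [hc, this, neg_smul]
    rw [h1, h2, one_smul]
    abel
  have hRn := hR (insert n l.support) c
  rw [hrepr] at hRn
  have hone : (1:ℝ) ≤ ∑ i ∈ insert n l.support, ‖c i‖^2 := by
    have := Finset.single_le_sum (f := fun i => ‖c i‖^2)
      (fun i _ => sq_nonneg _) (Finset.mem_insert_self n l.support)
    simpa [hc] using this
  have hdist' : ‖w n - b‖ < δ/3 := by rwa [dist_eq_norm] at hdist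
  have hnn : (0:ℝ) ≤ ‖w n - b‖ := norm_nonneg _
  nlinarith

open Filter Topology in
/-- A bounded separated sequence in an infinite-dimensional separable Hilbert space cannot be
almost overcomplete: it has a subsequence whose closed linear span has infinite codimension. -/
theorem stmt_19 {H : Type*} [NormedAddCommGroup H] [InnerProductSpace ℂ H] [CompleteSpace H]
    [TopologicalSpace.SeparableSpace H] (hH : ¬ FiniteDimensional ℂ H)
    (x : ℕ → H) (hbd : ∃ M : ℝ, ∀ n, ‖x n‖ ≤ M)
    (hsep : ∃ δ : ℝ, 0 < δ ∧ ∀ n m, n ≠ m → δ ≤ ‖x n - x m‖) :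
    ∃ φ : ℕ → ℕ, StrictMono φ ∧
      ¬ FiniteDimensional ℂ
        (H ⧸ (Submodule.span ℂ (Set.range (x ∘ φ))).topologicalClosure) := by
  classical
  obtain ⟨M, hM⟩ := hbd
  obtain ⟨δ, hδ, hxsep⟩ := hsep
  have hM0 : 0 ≤ M := le_trans (norm_nonneg _) (hM 0)
  obtain ⟨u, hu⟩ := TopologicalSpace.exists_dense_seq H
  -- diagonal extraction
  set F : ℕ → (ℕ → ℂ) := fun n k => inner ℂ (x n) (u k) with hF
  have hFmem : ∀ n, F n ∈ Set.pi Set.univ (fun k => Metric.closedBall (0:ℂ) (M * ‖u k‖)) := by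
    intro n k _
    simp only [Metric.mem_closedBall, dist_zero_right]
    calc ‖(inner ℂ (x n) (u k) : ℂ)‖ ≤ ‖x n‖ * ‖u k‖ := norm_inner_le_norm _ _
      _ ≤ M * ‖u k‖ := mul_le_mul_of_nonneg_right (hM n) (norm_nonneg _)
  have hcpt : IsCompact (Set.pi Set.univ (fun k => Metric.closedBall (0:ℂ) (M*‖u k‖))) :=
    isCompact_univ_pi fun k => isCompact_closedBall _ _
  obtain ⟨aℓ, -, φ₀, hφ₀, hconv⟩ := hcpt.tendsto_subseq hFmem
  have hconv' : ∀ k, Tendsto (fun n => (inner ℂ (x (φ₀ n)) (u k) : ℂ)) atTop (𝓝 (aℓ k)) :=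
    fun k => tendsto_pi_nhds.mp hconv k
  -- weak Cauchy for every vector
  have hCauchy : ∀ w : H, ∃ cw : ℂ,
      Tendsto (fun n => (inner ℂ (x (φ₀ n)) w : ℂ)) atTop (𝓝 cw) := by
    intro w
    have hcs : CauchySeq (fun n => (inner ℂ (x (φ₀ n)) w : ℂ)) := by
      rw [Metric.cauchySeq_iff]
      intro ε hε
      have hd : (0:ℝ) < ε/(6*(M+1)) := by positivity
      obtain ⟨k, hk⟩ := hu.exists_dist_lt w hd
      obtain ⟨N, hN⟩ := Metric.cauchySeq_iff.mp (hconv' k).cauchySeq (ε/3) (by positivity)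
      refine ⟨N, fun m hm n hn => ?_⟩
      have h1 : dist (inner ℂ (x (φ₀ m)) w : ℂ) (inner ℂ (x (φ₀ n)) w : ℂ)
          = ‖(inner ℂ (x (φ₀ m) - x (φ₀ n)) w : ℂ)‖ := by
        rw [dist_eq_norm, ← inner_sub_left]
      have h2 : (inner ℂ (x (φ₀ m) - x (φ₀ n)) w : ℂ)
          = inner ℂ (x (φ₀ m) - x (φ₀ n)) (w - u k) + (inner ℂ (x (φ₀ m)) (u k) - inner ℂ (x (φ₀ n)) (u k)) := by
        rw [inner_sub_right, ← inner_sub_left]; ring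
      have h3 : ‖(inner ℂ (x (φ₀ m) - x (φ₀ n)) (w - u k) : ℂ)‖ ≤ (M + M) * (ε/(6*(M+1))) := by
        calc ‖(inner ℂ (x (φ₀ m) - x (φ₀ n)) (w - u k) : ℂ)‖
            ≤ ‖x (φ₀ m) - x (φ₀ n)‖ * ‖w - u k‖ := norm_inner_le_norm _ _
          _ ≤ (M + M) * (ε/(6*(M+1))) := by
              apply mul_le_mul (le_trans (norm_sub_le _ _) (add_le_add (hM _) (hM _)))
                (le_of_lt (by rwa [dist_eq_norm] at hk)) (norm_nonneg _) (by positivity)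
      have h4 : ‖(inner ℂ (x (φ₀ m)) (u k) - inner ℂ (x (φ₀ n)) (u k) : ℂ)‖ < ε/3 := by
        rw [← dist_eq_norm]; exact hN m hm n hn
      have h5 : (M + M) * (ε/(6*(M+1))) ≤ ε/3 := by
        have hp : (0:ℝ) < 6*(M+1) := by positivity
        rw [mul_div_assoc', div_le_div_iff₀ hp (by norm_num : (0:ℝ) < 3)]
        nlinarith
      rw [h1, h2]
      calc ‖_ + _‖ ≤ _ := norm_add_le _ _
        _ < ε := by linarith
    exact cauchySeq_tendsto_of_complete hcs
  choose L hL using hCauchy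
  -- the weak limit y
  have hLadd : ∀ w₁ w₂, L (w₁ + w₂) = L w₁ + L w₂ := fun w₁ w₂ =>
    tendsto_nhds_unique (hL (w₁ + w₂))
      (by simpa only [inner_add_right] using (hL w₁).add (hL w₂))
  have hLsmul : ∀ (a : ℂ) w, L (a • w) = a * L w := fun a w =>
    tendsto_nhds_unique (hL (a • w))
      (by simpa only [inner_smul_right] using (hL w).const_mul a)
  have hLbound : ∀ w, ‖L w‖ ≤ M * ‖w‖ := by
    intro w
    refine le_of_tendsto (hL w).norm (Filter.Eventually.of_forall fun n => ?_)
    calc ‖(inner ℂ (x (φ₀ n)) w : ℂ)‖ ≤ ‖x (φ₀ n)‖ * ‖w‖ := norm_inner_le_norm _ _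
      _ ≤ M * ‖w‖ := mul_le_mul_of_nonneg_right (hM _) (norm_nonneg _)
  set f : H →L[ℂ] ℂ := LinearMap.mkContinuous
    { toFun := L, map_add' := hLadd, map_smul' := hLsmul } M hLbound with hf
  set y : H := (InnerProductSpace.toDual ℂ H).symm f with hy
  have hyw : ∀ w, (inner ℂ y w : ℂ) = L w := fun w => InnerProductSpace.toDual_symm_apply
  -- the weakly null sequence z
  set z : ℕ → H := fun n => x (φ₀ n) - y with hz
  have hznull : ∀ w, Tendsto (fun n => (inner ℂ (z n) w : ℂ)) atTop (𝓝 0) := by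
    intro w
    have heq : (fun n => (inner ℂ (z n) w : ℂ))
        = fun n => (inner ℂ (x (φ₀ n)) w : ℂ) - L w := by
      funext n; rw [hz]; rw [inner_sub_left, hyw w]
    rw [heq]
    simpa using (hL w).sub_const (L w)
  have hzsep : ∀ n m, n ≠ m → δ ≤ ‖z n - z m‖ := by
    intro n m hnm
    have : z n - z m = x (φ₀ n) - x (φ₀ m) := by rw [hz]; beta_reduce; abel
    rw [this]
    exact hxsep _ _ (fun h => hnm (hφ₀.injective h))
  have hzlow : ∃ N, ∀ n, N ≤ n → δ/2 ≤ ‖z n‖ := by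
    by_contra hcon
    push_neg at hcon
    obtain ⟨n₁, hn₁, hlt₁⟩ := hcon 0
    obtain ⟨n₂, hn₂, hlt₂⟩ := hcon (n₁ + 1)
    have hne : n₁ ≠ n₂ := by omega
    have h1 := hzsep n₁ n₂ hne
    have h2 := norm_sub_le (z n₁) (z n₂)
    linarith
  obtain ⟨N, hNlow⟩ := hzlow
  set z' : ℕ → H := fun n => z (n + N) with hz'
  have hz'null : ∀ w, Tendsto (fun n => (inner ℂ (z' n) w : ℂ)) atTop (𝓝 0) :=
    fun w => (hznull w).comp (tendsto_add_atTop_nat N)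
  have hz'low : ∀ n, δ/2 ≤ ‖z' n‖ := fun n => hNlow _ (by omega)
  have hz'sep : ∀ n m, n ≠ m → δ ≤ ‖z' n - z' m‖ :=
    fun n m hnm => hzsep _ _ (by omega)
  -- extraction of an almost-orthogonal subsequence
  have hspec : ∀ p k, ∃ m, p < m ∧
      ∀ j ≤ p, ‖(inner ℂ (z' j) (z' m) : ℂ)‖ ≤ δ^2/16 * (1/4:ℝ)^k := by
    intro p k
    have hpos : (0:ℝ) < δ^2/16 * (1/4:ℝ)^k := by positivity
    have hev : ∀ᶠ m in atTop, ∀ j ∈ Set.Iic p,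
        ‖(inner ℂ (z' j) (z' m) : ℂ)‖ ≤ δ^2/16 * (1/4:ℝ)^k := by
      rw [Filter.eventually_all_finite (Set.finite_Iic p)]
      intro j _
      have h1 : Tendsto (fun m => ‖(inner ℂ (z' m) (z' j) : ℂ)‖) atTop (𝓝 0) := by
        simpa using (hz'null (z' j)).norm
      filter_upwards [h1.eventually_lt_const hpos] with m hm
      rw [norm_inner_symm]
      exact le_of_lt hm
    obtain ⟨m, hm1, hm2⟩ := (hev.and (Filter.eventually_gt_atTop p)).exists
    exact ⟨m, hm2, fun j hj => hm1 j hj⟩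
  choose gg hg1 hg2 using hspec
  set t : ℕ → ℕ := fun n => Nat.rec 0 (fun n tn => gg tn (n + 1)) n with htdef
  have htsucc : ∀ n, t (n + 1) = gg (t n) (n + 1) := fun n => rfl
  have htmono : StrictMono t := strictMono_nat_of_lt_succ fun n => by
    rw [htsucc]; exact hg1 (t n) (n + 1)
  set W : ℕ → H := fun i => z' (t i) with hW
  have hWlow : ∀ i, δ/2 ≤ ‖W i‖ := fun i => hz'low (t i)
  have hop : ∀ i j, i ≠ j →
      ‖(inner ℂ (W i) (W j) : ℂ)‖ ≤ δ^2/16 * ((1/2:ℝ)^i * (1/2:ℝ)^j) := by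
    have hkey : ∀ i j, i < j →
        ‖(inner ℂ (W i) (W j) : ℂ)‖ ≤ δ^2/16 * ((1/2:ℝ)^i * (1/2:ℝ)^j) := by
      intro i j hij
      obtain ⟨n, rfl⟩ : ∃ n, j = n + 1 := ⟨j - 1, by omega⟩
      have h1 : t i ≤ t n := htmono.monotone (by omega)
      have h2 : ‖(inner ℂ (z' (t i)) (z' (t (n+1))) : ℂ)‖ ≤ δ^2/16 * (1/4:ℝ)^(n+1) := by
        rw [htsucc n]; exact hg2 (t n) (n + 1) (t i) h1
      refine le_trans h2 ?_
      have h3 : ((1/4:ℝ))^(n+1) = (1/2:ℝ)^(n+1) * (1/2:ℝ)^(n+1) := by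
        rw [← mul_pow]; norm_num
      have h4 : ((1/2:ℝ))^(n+1) ≤ (1/2:ℝ)^i :=
        pow_le_pow_of_le_one (by norm_num) (by norm_num) (by omega)
      have h5 : (0:ℝ) ≤ (1/2:ℝ)^(n+1) := by positivity
      have h6 : (0:ℝ) ≤ δ^2/16 := by positivity
      rw [h3]
      have := mul_le_mul_of_nonneg_right h4 h5
      exact mul_le_mul_of_nonneg_left this h6
    intro i j hij
    rcases lt_or_gt_of_ne hij with h | h
    · exact hkey i j h
    · rw [norm_inner_symm]
      calc ‖(inner ℂ (W j) (W i) : ℂ)‖ ≤ δ^2/16 * ((1/2:ℝ)^j * (1/2:ℝ)^i) := hkey j i h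
        _ = δ^2/16 * ((1/2:ℝ)^i * (1/2:ℝ)^j) := by ring
  have hR : ∀ (s : Finset ℕ) (c : ℕ → ℂ),
      δ^2/6 * ∑ i ∈ s, ‖c i‖^2 ≤ ‖∑ i ∈ s, c i • W i‖^2 :=
    aux_riesz δ hδ W hWlow hop
  -- biorthogonal-type vectors
  set K : ℕ → Submodule ℂ H := fun n =>
    (Submodule.span ℂ (W '' {i | i ≠ n})).topologicalClosure with hKdef
  have hgex : ∀ n, ∃ gn : H, gn ∈ (K n)ᗮ ∧ W n - gn ∈ K n := by
    intro n
    haveI : CompleteSpace (K n) :=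
      (Submodule.isClosed_topologicalClosure _).completeSpace_coe
    refine ⟨W n - (Submodule.orthogonalProjection (K n) (W n) : H),
      Submodule.sub_starProjection_mem_orthogonal _, ?_⟩
    simpa [sub_sub_cancel] using ((Submodule.orthogonalProjection (K n) (W n)).2)
  choose g hgorth hgP using hgex
  have hzK : ∀ n i, i ≠ n → W i ∈ K n := fun n i hi =>
    Submodule.le_topologicalClosure _ (Submodule.subset_span ⟨i, hi, rfl⟩)
  have hg0 : ∀ n u', u' ∈ K n → (inner ℂ (g n) u' : ℂ) = 0 := fun n u' hu' =>
    inner_eq_zero_symm.mpr (((K n).mem_orthogonal (g n)).mp (hgorth n) u' hu')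
  have hgz0 : ∀ n i, i ≠ n → (inner ℂ (g n) (W i) : ℂ) = 0 := fun n i hi =>
    hg0 n _ (hzK n i hi)
  have hgself : ∀ n, (inner ℂ (g n) (W n) : ℂ) = ((‖g n‖^2 : ℝ) : ℂ) := by
    intro n
    calc (inner ℂ (g n) (W n) : ℂ) = inner ℂ (g n) ((W n - g n) + g n) := by
          rw [sub_add_cancel]
      _ = inner ℂ (g n) (W n - g n) + inner ℂ (g n) (g n) := inner_add_right _ _ _
      _ = ((‖g n‖^2 : ℝ) : ℂ) := by
          rw [hg0 n _ (hgP n), inner_self_eq_norm_sq_to_K, zero_add]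
          norm_cast
  have hgne : ∀ n, g n ≠ 0 := by
    intro n h0
    have hWn : W n ∈ K n := by
      have := hgP n; rwa [h0, sub_zero] at this
    exact aux_notmem δ hδ W hR n {i | i ≠ n} (by simp) hWn
  have hgnorm : ∀ n, ((‖g n‖^2 : ℝ) : ℂ) ≠ 0 := by
    intro n
    simp only [ne_eq, Complex.ofReal_eq_zero]
    exact pow_ne_zero 2 (norm_ne_zero_iff.mpr (hgne n))
  -- the final subsequence
  set φ : ℕ → ℕ := fun k => φ₀ (t (2*k) + N) with hφdef
  have hφmono : StrictMono φ := by
    intro a b hab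
    exact hφ₀ (by have := htmono (show 2*a < 2*b by omega); omega)
  have hxφ : ∀ k, x (φ k) = W (2*k) + y := by
    intro k
    show x (φ₀ (t (2*k) + N)) = z (t (2*k) + N) + y
    simp only [hz]
    abel
  refine ⟨φ, hφmono, ?_⟩
  intro hFD
  set S := Submodule.span ℂ (Set.range (x ∘ φ)) with hSdef
  -- combinations of the biorthogonal vectors orthogonal to the chosen subsequence
  set h : ℕ → H := fun m =>
    if (inner ℂ (g (4*m+1)) y : ℂ) = 0 then g (4*m+1)
    else (starRingEnd ℂ) (inner ℂ (g (4*m+3)) y : ℂ) • g (4*m+1)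
      - (starRingEnd ℂ) (inner ℂ (g (4*m+1)) y : ℂ) • g (4*m+3) with hhdef
  have hhx : ∀ m k, (inner ℂ (h m) (x (φ k)) : ℂ) = 0 := by
    intro m k
    rw [hxφ k]
    simp only [hhdef]
    by_cases hcm : (inner ℂ (g (4*m+1)) y : ℂ) = 0
    · rw [if_pos hcm, inner_add_right, hgz0 _ _ (by omega), hcm, add_zero]
    · rw [if_neg hcm, inner_sub_left, inner_smul_left, inner_smul_left,
        inner_add_right, inner_add_right, hgz0 _ _ (by omega), hgz0 _ _ (by omega)]
      simp only [Complex.conj_conj, zero_add]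
      ring
  have hinner_sq : ∀ n, (inner ℂ (g n) (W n) : ℂ) ≠ 0 := fun n => by
    rw [hgself n]; exact hgnorm n
  set T : ℕ → H := fun m =>
    if (inner ℂ (g (4*m+1)) y : ℂ) = 0 then W (4*m+1) else W (4*m+3) with hTdef
  have htest0 : ∀ m m', m' ≠ m → (inner ℂ (h m') (T m) : ℂ) = 0 := by
    intro m m' hne
    simp only [hhdef, hTdef]
    by_cases h1 : (inner ℂ (g (4*m'+1)) y : ℂ) = 0 <;>
      by_cases h2 : (inner ℂ (g (4*m+1)) y : ℂ) = 0 <;>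
      simp [h1, h2, inner_sub_left, inner_smul_left,
        hgz0 _ _ (show (4*m+1 : ℕ) ≠ 4*m'+1 by omega),
        hgz0 _ _ (show (4*m+3 : ℕ) ≠ 4*m'+1 by omega),
        hgz0 _ _ (show (4*m+1 : ℕ) ≠ 4*m'+3 by omega),
        hgz0 _ _ (show (4*m+3 : ℕ) ≠ 4*m'+3 by omega)]
  have htestm : ∀ m, (inner ℂ (h m) (T m) : ℂ) ≠ 0 := by
    intro m
    simp only [hhdef, hTdef]
    by_cases h1 : (inner ℂ (g (4*m+1)) y : ℂ) = 0
    · rw [if_pos h1, if_pos h1]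
      exact hinner_sq (4*m+1)
    · rw [if_neg h1, if_neg h1, inner_sub_left, inner_smul_left, inner_smul_left,
        hgz0 _ _ (show (4*m+3 : ℕ) ≠ 4*m+1 by omega), hgself (4*m+3)]
      simp only [Complex.conj_conj, mul_zero, zero_sub, neg_ne_zero]
      exact mul_ne_zero h1 (hgnorm _)
  have hindep : LinearIndependent ℂ h := by
    rw [linearIndependent_iff']
    intro s b hsum m hms
    have h0 : (inner ℂ (∑ i ∈ s, b i • h i) (T m) : ℂ) = 0 := by
      rw [hsum, inner_zero_left]
    rw [sum_inner] at h0
    have h1 : ∑ i ∈ s, (starRingEnd ℂ) (b i) * (inner ℂ (h i) (T m) : ℂ) = 0 := by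
      simpa only [inner_smul_left] using h0
    rw [Finset.sum_eq_single_of_mem m hms
      (fun i _ hi => by rw [htest0 m i hi, mul_zero])] at h1
    rcases mul_eq_zero.mp h1 with h2 | h2
    · simpa using h2
    · exact absurd h2 (htestm m)
  have hhS : ∀ m, h m ∈ Sᗮ := by
    intro m
    have horth : S ⟂ Submodule.span ℂ {h m} := by
      rw [hSdef, Submodule.isOrtho_span]
      rintro u' ⟨k, rfl⟩ v' hv'
      rw [Set.mem_singleton_iff] at hv'
      subst hv'
      exact inner_eq_zero_symm.mpr (hhx m k)
    exact Submodule.isOrtho_iff_le.mp horth.symm (Submodule.mem_span_singleton_self _)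
  haveI hQ : FiniteDimensional ℂ (H ⧸ S.topologicalClosure) := hFD
  haveI : CompleteSpace (S.topologicalClosure) :=
    (Submodule.isClosed_topologicalClosure _).completeSpace_coe
  have hcompl : IsCompl S.topologicalClosure (S.topologicalClosure)ᗮ :=
    Submodule.isCompl_orthogonal_of_hasOrthogonalProjection
  haveI hFD2 : FiniteDimensional ℂ ((S.topologicalClosure)ᗮ : Submodule ℂ H) :=
    (Submodule.quotientEquivOfIsCompl _ _ hcompl).finiteDimensional
  have horth_eq : (S.topologicalClosure)ᗮ = Sᗮ := by
    refine le_antisymm (Submodule.orthogonal_le (Submodule.le_topologicalClosure S)) ?_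
    intro v hv
    rw [Submodule.mem_orthogonal] at hv ⊢
    intro u' hu'
    rw [← SetLike.mem_coe, Submodule.topologicalClosure_coe] at hu'
    have hcl : IsClosed {w : H | (inner ℂ w v : ℂ) = 0} :=
      isClosed_eq (Continuous.inner continuous_id continuous_const) continuous_const
    exact hcl.closure_subset_iff.mpr (fun w hw => hv w hw) hu'
  haveI hFD3 : FiniteDimensional ℂ (Sᗮ : Submodule ℂ H) := horth_eq ▸ hFD2
  have hli : LinearIndependent ℂ (fun m => (⟨h m, hhS m⟩ : ↥(Sᗮ))) :=
    LinearIndependent.of_comp (Sᗮ).subtype (by exact hindep)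
  have hfin : Finite ℕ := hli.finite
  exact not_finite ℕ
end
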